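/- arXiv:1404.3446 — 3 statements merged into one kernel-verified Lean document; each statement's English description precedes it below -/
import Mathlib

section
/- Let n ≥ 3 and α, β > 0. The event {S_{n,α,β}(n−1) = α}, i.e. that the box (n−1,1) of S_{n,α,β} contains an α, has positive probability, and conditionally on this event the subtableau S_{n,α,β}[1,3] (obtained by deleting the first two columns) is distributed as S_{n−2,α,β}: for every T ∈ S̄_{n−2}, P( S_{n,α,β}[1,3] = T | S_{n,α,β}(n−1,1) = α ) = wt(T)/Z_{n−2}(α,β). -/
/-!
If the box `(n-1, 1)` holds an α, the rules of a staircase tableau force its first two columns: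
the diagonal box `(n, 1)` below cannot hold an α (which would empty the box above it), so it holds
a β; the diagonal box `(n-1, 2)` to its right cannot hold a β (which would empty the box to its
left), so it holds an α; every other box of these columns lies above an α or outside the staircase.
Hence `S ↦ S[1,3]` is a bijection from this event onto `S̄_{n-2}` multiplying weights by `α²β`, so
the event has probability `α²β Z_{n-2} / Z_n > 0` and the conditional law of `S[1,3]` is
`wt(T) / Z_{n-2}`.
-/

/-- The two symbols α, β that may fill a box of an α/β-staircase tableau. -/
inductive ABSymbol : Type
  | A : ABSymbol  -- α
  | B : ABSymbol  -- β
  deriving DecidableEq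

instance : Fintype ABSymbol :=
  ⟨{ABSymbol.A, ABSymbol.B}, fun x => by cases x <;> simp⟩

/-- `f` is an α/β-staircase tableau of size `n`.  Boxes are indexed `0`-based, so
the box `(i, j)` (with `1 ≤ i, j` and `i + j ≤ n + 1` in the `1`-based indexing of
the paper) corresponds to `f ⟨i-1⟩ ⟨j-1⟩`; the condition `i + j ≤ n + 1` becomes
`(i-1) + (j-1) < n`, and the main diagonal `i + j = n + 1` becomes
`(i-1) + (j-1) + 1 = n`. -/
def IsABStaircase (n : ℕ) (f : Fin n → Fin n → Option ABSymbol) : Prop :=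
  (∀ i j : Fin n, n ≤ (i : ℕ) + (j : ℕ) → f i j = none) ∧
  (∀ i j i' : Fin n, f i j = some ABSymbol.A → i' < i → f i' j = none) ∧
  (∀ i j j' : Fin n, f i j = some ABSymbol.B → j' < j → f i j' = none) ∧
  (∀ i j : Fin n, (i : ℕ) + (j : ℕ) + 1 = n → f i j ≠ none)

/-- `N_α(f)`, the number of α's in `f`. -/
def NA (n : ℕ) (f : Fin n → Fin n → Option ABSymbol) : ℕ :=
  (Finset.univ.filter (fun p : Fin n × Fin n => f p.1 p.2 = some ABSymbol.A)).card

/-- `N_β(f)`, the number of β's in `f`. -/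
def NB (n : ℕ) (f : Fin n → Fin n → Option ABSymbol) : ℕ :=
  (Finset.univ.filter (fun p : Fin n × Fin n => f p.1 p.2 = some ABSymbol.B)).card

/-- The weight `wt(f) = α^{N_α(f)} β^{N_β(f)}`. -/
noncomputable def wt (α β : ℝ) (n : ℕ) (f : Fin n → Fin n → Option ABSymbol) : ℝ :=
  α ^ NA n f * β ^ NB n f

open scoped Classical in
/-- The partition function `Z_n(α, β) = Σ_{S ∈ S̄_n} wt(S)`. -/
noncomputable def Z (α β : ℝ) (n : ℕ) : ℝ :=
  ∑ f ∈ Finset.univ.filter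
      (fun f : Fin n → Fin n → Option ABSymbol => IsABStaircase n f),
    wt α β n f

open scoped Classical in
/-- The probability that the random tableau `S_{n,α,β}` lies in the event `E`. -/
noncomputable def stProb (α β : ℝ) (n : ℕ)
    (E : (Fin n → Fin n → Option ABSymbol) → Prop) : ℝ :=
  (∑ f ∈ Finset.univ.filter
      (fun f : Fin n → Fin n → Option ABSymbol => IsABStaircase n f ∧ E f),
    wt α β n f) / Z α β n

open scoped Classical in
/-- The expectation of `g` under the law of the random tableau `S_{n,α,β}`. -/
noncomputable def stExp (α β : ℝ) (n : ℕ)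
    (g : (Fin n → Fin n → Option ABSymbol) → ℝ) : ℝ :=
  (∑ f ∈ Finset.univ.filter
      (fun f : Fin n → Fin n → Option ABSymbol => IsABStaircase n f),
    wt α β n f * g f) / Z α β n

/-- `diag2 f j` is the content of the second-main-diagonal box `(n - j, j)`
(in the `1`-based indexing of the paper), defined for `1 ≤ j ≤ n - 1`. -/
def diag2 {n : ℕ} (f : Fin n → Fin n → Option ABSymbol) (j : ℕ) : Option ABSymbol :=
  if h : 1 ≤ j ∧ j + 1 ≤ n then f ⟨n - j - 1, by omega⟩ ⟨j - 1, by omega⟩ else none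

/-- `A_n`, the number of α's on the second main diagonal of `f`. -/
def Acount (n : ℕ) (f : Fin n → Fin n → Option ABSymbol) : ℕ :=
  ((Finset.Icc 1 (n - 1)).filter (fun j => diag2 f j = some ABSymbol.A)).card

/-- `B_n`, the number of β's on the second main diagonal of `f`. -/
def Bcount (n : ℕ) (f : Fin n → Fin n → Option ABSymbol) : ℕ :=
  ((Finset.Icc 1 (n - 1)).filter (fun j => diag2 f j = some ABSymbol.B)).card

/-- `X_n`, the number of nonempty boxes on the second main diagonal of `f`. -/
def Xcount (n : ℕ) (f : Fin n → Fin n → Option ABSymbol) : ℕ :=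
  ((Finset.Icc 1 (n - 1)).filter (fun j => diag2 f j ≠ none)).card

/-- `J_{r,m}`: the set of `r`-tuples `1 ≤ j_1 < … < j_r ≤ m` with
`j_k ≤ j_{k+1} - 2` for all `k`. -/
def Jset (r m : ℕ) : Finset (Fin r → ℕ) :=
  (Fintype.piFinset (fun _ : Fin r => Finset.Icc 1 m)).filter
    (fun j => ∀ k l : Fin r, k < l → j k + 2 ≤ j l)

/-- The subtableau `S[1,3]` of size `n - 2` obtained by deleting the first two
columns of `S`. -/
def subTab (n : ℕ) (f : Fin n → Fin n → Option ABSymbol) :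
    Fin (n - 2) → Fin (n - 2) → Option ABSymbol :=
  fun i j =>
    f ⟨(i : ℕ), by have := i.isLt; omega⟩ ⟨(j : ℕ) + 2, by have := j.isLt; omega⟩

open Finset

variable {m : ℕ}

def extendByCorner (T : Fin m → Fin m → Option ABSymbol) (i j : Fin (m + 2)) :
    Option ABSymbol :=
  if (i : ℕ) = m + 1 ∧ (j : ℕ) = 0 then some .B
  else if (i : ℕ) = m ∧ (j : ℕ) < 2 then some .A
  else if h : (i : ℕ) < m ∧ 2 ≤ (j : ℕ) then T ⟨i, h.1⟩ ⟨j - 2, by omega⟩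
  else none

theorem subTab_extendByCorner (T : Fin m → Fin m → Option ABSymbol) :
    subTab (m + 2) (extendByCorner T) = T := by
  funext i j
  have := i.isLt
  simp [subTab, extendByCorner]
  omega

theorem isABStaircase_subTab {f : Fin (m + 2) → Fin (m + 2) → Option ABSymbol}
    (hf : IsABStaircase (m + 2) f) : IsABStaircase m (subTab (m + 2) f) := by
  obtain ⟨hout, hα, hβ, hdiag⟩ := hf
  refine ⟨fun i j h => hout _ _ (by simp; omega), fun i j i' h hi => hα _ _ _ h hi,
    fun i j j' h hj => hβ _ _ _ h (Fin.mk_lt_mk.mpr (by have := Fin.lt_def.mp hj; omega)),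
    fun i j h => hdiag _ _ (by simp; omega)⟩

theorem isABStaircase_extendByCorner {T : Fin m → Fin m → Option ABSymbol}
    (hT : IsABStaircase m T) : IsABStaircase (m + 2) (extendByCorner T) := by
  obtain ⟨hout, hα, hβ, hdiag⟩ := hT
  refine ⟨fun i j h => ?_, fun i j i' h hi => ?_, fun i j j' h hj => ?_, fun i j h => ?_⟩
  all_goals simp only [extendByCorner, Fin.lt_def] at *
  · split_ifs <;> first | rfl | omega | exact hout ⟨i, by omega⟩ ⟨j - 2, by omega⟩ (by simp; omega)
  · split_ifs at h ⊢ <;> first | rfl | omega | simp at h |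
      exact hα _ _ ⟨i', by omega⟩ h (Fin.mk_lt_mk.mpr hi)
  · split_ifs at h ⊢ <;> first | rfl | omega | simp at h |
      exact hβ _ _ ⟨j' - 2, by omega⟩ h (Fin.mk_lt_mk.mpr (by omega))
  · split_ifs <;> first | omega |
      exact hdiag ⟨i, by omega⟩ ⟨j - 2, by omega⟩ (by simp; omega) | simp

theorem eq_extendByCorner_subTab
    {f : Fin (m + 2) → Fin (m + 2) → Option ABSymbol} (hf : IsABStaircase (m + 2) f)
    (hA : f ⟨m, by omega⟩ ⟨0, by omega⟩ = some .A) :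
    f = extendByCorner (subTab (m + 2) f) := by
  obtain ⟨hout, hα, hβ, hdiag⟩ := hf
  have hB : f ⟨m + 1, by omega⟩ ⟨0, by omega⟩ = some .B := by
    rcases hx : f ⟨m + 1, by omega⟩ ⟨0, by omega⟩ with _ | _ | _
    · exact absurd hx (hdiag _ _ (by simp))
    · exact absurd ((hα _ _ ⟨m, by omega⟩ hx (by simp)).symm.trans hA) (by simp)
    · rfl
  have hA' : f ⟨m, by omega⟩ ⟨1, by omega⟩ = some .A := by
    rcases hx : f ⟨m, by omega⟩ ⟨1, by omega⟩ with _ | _ | _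
    · exact absurd hx (hdiag _ _ (by simp))
    · rfl
    · exact absurd ((hβ _ _ ⟨0, by omega⟩ hx (by simp)).symm.trans hA) (by simp)
  funext ⟨i, hi⟩ ⟨j, hj⟩
  simp only [extendByCorner, subTab]
  split_ifs with hβbox hαbox hinner
  · obtain ⟨rfl, rfl⟩ : i = m + 1 ∧ j = 0 := by omega
    exact hB
  · obtain rfl : i = m := by omega
    obtain rfl | rfl : j = 0 ∨ j = 1 := by omega
    exacts [hA, hA']
  · congr 2; omega
  · by_cases hij : m + 2 ≤ i + j
    · exact hout _ _ hij
    obtain rfl | rfl : j = 0 ∨ j = 1 := by omega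
    exacts [hα _ _ _ hA (show i < m by omega), hα _ _ _ hA' (show i < m by omega)]

theorem card_extendByCorner (T : Fin m → Fin m → Option ABSymbol) (s : ABSymbol) :
    #{p : Fin (m + 2) × Fin (m + 2) | extendByCorner T p.1 p.2 = some s} =
      #{p : Fin m × Fin m | T p.1 p.2 = some s} + if s = .A then 2 else 1 := by
  have hm : ∀ i : Fin m, (i : ℕ) ≠ m := fun i => i.isLt.ne
  have hm1 : ∀ i : Fin m, (i : ℕ) ≠ m + 1 := fun i => by omega
  simp only [card_filter, Fintype.sum_prod_type]
  rw [Fin.sum_univ_castSucc, Fin.sum_univ_castSucc]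
  simp only [Fin.sum_univ_succ]
  cases s <;> simp [extendByCorner, hm, hm1]

theorem wt_extendByCorner (α β : ℝ) (T : Fin m → Fin m → Option ABSymbol) :
    wt α β (m + 2) (extendByCorner T) = α ^ 2 * β * wt α β m T := by
  simp only [wt, NA, NB, card_extendByCorner, if_pos, reduceCtorEq, if_false]
  ring

theorem diag2_one (f : Fin (m + 2) → Fin (m + 2) → Option ABSymbol) :
    diag2 f 1 = f ⟨m, by omega⟩ ⟨0, by omega⟩ :=
  dif_pos ⟨le_rfl, by omega⟩

open scoped Classical in
theorem sum_wt_corner_eq_mul_sum (α β : ℝ) (P : (Fin m → Fin m → Option ABSymbol) → Prop) :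
    ∑ f with IsABStaircase (m + 2) f ∧ diag2 f 1 = some .A ∧ P (subTab (m + 2) f),
        wt α β (m + 2) f =
      α ^ 2 * β * ∑ T with IsABStaircase m T ∧ P T, wt α β m T := by
  rw [Finset.mul_sum]
  symm
  apply Finset.sum_nbij' extendByCorner (subTab (m + 2))
  · simp only [mem_filter, mem_univ, true_and, diag2_one, subTab_extendByCorner]
    exact fun T ⟨hT, hP⟩ => ⟨isABStaircase_extendByCorner hT, by simp [extendByCorner], hP⟩
  · simp only [mem_filter, mem_univ, true_and]
    exact fun f ⟨hf, _, hP⟩ => ⟨isABStaircase_subTab hf, hP⟩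
  · exact fun T _ => subTab_extendByCorner T
  · simp only [mem_filter, mem_univ, true_and, diag2_one]
    exact fun f ⟨hf, hA, _⟩ => (eq_extendByCorner_subTab hf hA).symm
  · exact fun T _ => (wt_extendByCorner α β T).symm

def diagonalAlpha (n : ℕ) (i j : Fin n) : Option ABSymbol :=
  if (i : ℕ) + j + 1 = n then some .A else none

theorem isABStaircase_diagonalAlpha (n : ℕ) : IsABStaircase n (diagonalAlpha n) := by
  refine ⟨fun i j h => ?_, fun i j i' h hi => ?_, fun i j j' h _ => ?_, fun i j h => ?_⟩
  all_goals simp only [diagonalAlpha, Fin.lt_def] at *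
  · rw [if_neg (by omega)]
  · split_ifs at h
    rw [if_neg (by omega)]
  · split_ifs at h
    simp at h
  · simp [h]

theorem wt_pos {α β : ℝ} (hα : 0 < α) (hβ : 0 < β) (n : ℕ)
    (f : Fin n → Fin n → Option ABSymbol) : 0 < wt α β n f := by
  unfold wt
  positivity

theorem Z_pos {α β : ℝ} (hα : 0 < α) (hβ : 0 < β) (n : ℕ) : 0 < Z α β n :=
  Finset.sum_pos (fun f _ => wt_pos hα hβ n f)
    ⟨diagonalAlpha n, by simpa using isABStaircase_diagonalAlpha n⟩

open scoped Classical in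
theorem stProb_eq_sum (α β : ℝ) (n : ℕ) (E : (Fin n → Fin n → Option ABSymbol) → Prop)
    [DecidablePred E] :
    stProb α β n E = (∑ f with IsABStaircase n f ∧ E f, wt α β n f) / Z α β n := by
  unfold stProb
  congr!

open scoped Classical in
theorem stProb_true {α β : ℝ} {n : ℕ} (hZ : Z α β n ≠ 0) :
    stProb α β n (fun _ => True) = 1 := by
  rw [stProb_eq_sum, Finset.filter_congr fun _ _ => iff_of_eq (and_true _)]
  exact div_self hZ

open scoped Classical in
theorem stProb_eq_singleton {α β : ℝ} {n : ℕ} {T : Fin n → Fin n → Option ABSymbol}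
    (hT : IsABStaircase n T) : stProb α β n (· = T) = wt α β n T / Z α β n := by
  rw [stProb_eq_sum, Finset.sum_eq_single_of_mem T (by simpa using hT)]
  intro f hf hne
  exact absurd (Finset.mem_filter.1 hf).2.2 hne

open scoped Classical in
theorem stProb_corner_and_subTab (α β : ℝ) (P : (Fin m → Fin m → Option ABSymbol) → Prop)
    (hZ : Z α β m ≠ 0) :
    stProb α β (m + 2) (fun f => diag2 f 1 = some .A ∧ P (subTab (m + 2) f)) =
      α ^ 2 * β * Z α β m / Z α β (m + 2) * stProb α β m P := by
  rw [stProb_eq_sum, stProb_eq_sum, sum_wt_corner_eq_mul_sum]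
  field_simp

/-- Lemma 1 (`SWCorner`): conditionally on the box `(n-1, 1)` of `S_{n,α,β}`
containing an α, the subtableau `S_{n,α,β}[1,3]` is distributed as `S_{n-2,α,β}`. -/
theorem stmt1 (n : ℕ) (hn : 3 ≤ n) (α β : ℝ) (hα : 0 < α) (hβ : 0 < β) :
    0 < stProb α β n (fun f => diag2 f 1 = some ABSymbol.A) ∧
    ∀ T : Fin (n - 2) → Fin (n - 2) → Option ABSymbol, IsABStaircase (n - 2) T →
      stProb α β n (fun f => diag2 f 1 = some ABSymbol.A ∧ subTab n f = T) /
          stProb α β n (fun f => diag2 f 1 = some ABSymbol.A)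
        = wt α β (n - 2) T / Z α β (n - 2) := by
  obtain ⟨m, rfl⟩ : ∃ m, n = m + 2 := ⟨n - 2, by omega⟩
  have hZm := Z_pos hα hβ m
  have hZ := Z_pos hα hβ (m + 2)
  have hcorner : stProb α β (m + 2) (fun f => diag2 f 1 = some .A) =
      α ^ 2 * β * Z α β m / Z α β (m + 2) := by
    simpa [stProb_true hZm.ne'] using stProb_corner_and_subTab α β (fun _ => True) hZm.ne'
  refine ⟨hcorner ▸ by positivity, fun T hT => ?_⟩
  show _ = wt α β m T / Z α β m
  rw [stProb_corner_and_subTab (m := m) α β (· = T) hZm.ne', stProb_eq_singleton (n := m) hT,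
    hcorner]
  field_simp
end

section
/- For all integers r ≥ 1 and m ≥ 0, Σ_{(j_1,…,j_r) ∈ J_{r,m}} ( ∏_{k=1}^{r} j_k ) = (m+1)_{2r} / (2^r · r!), where (x)_t = x(x−1)⋯(x−t+1) is the falling factorial. -/
theorem Nat.succ_descFactorial_succ_eq_add (n k : ℕ) :
    (n + 1).descFactorial (k + 1) = n.descFactorial (k + 1) + (k + 1) * n.descFactorial k := by
  rcases le_or_gt k n with h | h
  · rw [succ_descFactorial_succ, descFactorial_succ, ← add_mul]
    congr 1
    omega
  · rw [succ_descFactorial_succ, descFactorial_eq_zero_iff_lt.mpr h,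
      descFactorial_eq_zero_iff_lt.mpr (by omega : n < k + 1)]
    simp

section Jset

variable {r m : ℕ} {j : Fin r → ℕ}

theorem mem_Jset :
    j ∈ Jset r m ↔ (∀ k, 1 ≤ j k ∧ j k ≤ m) ∧ ∀ k l : Fin r, k < l → j k + 2 ≤ j l := by
  simp [Jset, forall_and]

theorem Jset_succ_zero : Jset (r + 1) 0 = ∅ := by
  ext j
  simp only [mem_Jset, Finset.notMem_empty, iff_false, not_and]
  intro hb _
  have := hb 0
  omega

theorem Jset_one_one : Jset 1 1 = {fun _ => 1} := by
  ext j
  simp only [mem_Jset, Finset.mem_singleton, Fin.forall_fin_one, Fin.lt_def]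
  constructor
  · rintro ⟨hb, -⟩
    funext k
    rw [Subsingleton.elim k 0]
    omega
  · rintro rfl
    simp

theorem Jset_add_two_one : Jset (r + 2) 1 = ∅ := by
  ext j
  simp only [mem_Jset, Finset.notMem_empty, iff_false, not_and]
  intro hb hgap
  have := hgap 0 1 Fin.zero_lt_one
  have := hb 1
  omega

theorem le_last_of_mem_Jset {j : Fin (r + 1) → ℕ} (hj : j ∈ Jset (r + 1) m) (k : Fin (r + 1)) :
    j k ≤ j (Fin.last r) := by
  obtain ⟨-, hgap⟩ := mem_Jset.mp hj
  rcases (Fin.le_last k).lt_or_eq with hk | rfl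
  · have := hgap k _ hk
    omega
  · rfl

theorem filter_last_ne_Jset :
    (Jset (r + 1) (m + 1)).filter (fun j => j (Fin.last r) ≠ m + 1) = Jset (r + 1) m := by
  ext j
  constructor
  · intro hj
    obtain ⟨hj, hlast⟩ := Finset.mem_filter.mp hj
    obtain ⟨hb, hgap⟩ := mem_Jset.mp hj
    refine mem_Jset.mpr ⟨fun k => ⟨(hb k).1, ?_⟩, hgap⟩
    have := le_last_of_mem_Jset hj k
    have := (hb (Fin.last r)).2
    omega
  · intro hj
    obtain ⟨hb, hgap⟩ := mem_Jset.mp hj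
    refine Finset.mem_filter.mpr
      ⟨mem_Jset.mpr ⟨fun k => ⟨(hb k).1, (hb k).2.trans m.le_succ⟩, hgap⟩, ?_⟩
    have := (hb (Fin.last r)).2
    omega

theorem snoc_mem_Jset (hj : j ∈ Jset r m) :
    (Fin.snoc j (m + 2) : Fin (r + 1) → ℕ) ∈ Jset (r + 1) (m + 2) := by
  obtain ⟨hb, hgap⟩ := mem_Jset.mp hj
  refine mem_Jset.mpr ⟨fun k => ?_, fun k l hkl => ?_⟩
  · induction k using Fin.lastCases with
    | last => simp
    | cast k => simpa using ⟨(hb k).1, (hb k).2.trans (by omega)⟩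
  · obtain ⟨k, rfl⟩ := Fin.exists_castSucc_eq.mpr (Fin.ne_last_of_lt hkl)
    induction l using Fin.lastCases with
    | last => simpa using (hb k).2
    | cast l => simpa using hgap k l (Fin.castSucc_lt_castSucc_iff.mp hkl)

theorem init_mem_Jset {j : Fin (r + 1) → ℕ} (hj : j ∈ Jset (r + 1) (m + 2))
    (hlast : j (Fin.last r) = m + 2) : Fin.init j ∈ Jset r m := by
  obtain ⟨hb, hgap⟩ := mem_Jset.mp hj
  refine mem_Jset.mpr ⟨fun k => ⟨(hb _).1, ?_⟩, fun k l hkl => hgap _ _ (by simpa using hkl)⟩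
  have := hgap k.castSucc (Fin.last r) (Fin.castSucc_lt_last k)
  simp only [Fin.init]
  omega

theorem sum_prod_filter_last_eq :
    ∑ j ∈ (Jset (r + 1) (m + 2)).filter (fun j => j (Fin.last r) = m + 2),
        ∏ k, (j k : ℝ) = (m + 2) * ∑ j ∈ Jset r m, ∏ k, (j k : ℝ) := by
  rw [Finset.mul_sum]
  refine Finset.sum_nbij' Fin.init (fun j => Fin.snoc j (m + 2)) ?_ ?_ ?_ ?_ ?_
  · intro j hj
    obtain ⟨hj, hlast⟩ := Finset.mem_filter.mp hj
    exact init_mem_Jset hj hlast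
  · intro j hj
    exact Finset.mem_filter.mpr ⟨snoc_mem_Jset hj, by simp⟩
  · intro j hj
    rw [← (Finset.mem_filter.mp hj).2]
    exact Fin.snoc_init_self j
  · intro j _
    exact Fin.init_snoc _ _
  · intro j hj
    rw [Fin.prod_univ_castSucc, (Finset.mem_filter.mp hj).2, mul_comm]
    push_cast
    rfl

theorem sum_prod_Jset_add_two :
    ∑ j ∈ Jset (r + 1) (m + 2), ∏ k, (j k : ℝ)
      = ∑ j ∈ Jset (r + 1) (m + 1), ∏ k, (j k : ℝ)
        + (m + 2) * ∑ j ∈ Jset r m, ∏ k, (j k : ℝ) := by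
  rw [← Finset.sum_filter_not_add_sum_filter _ (fun j => j (Fin.last r) = m + 2),
    filter_last_ne_Jset, sum_prod_filter_last_eq]

end Jset

theorem stmt5_general (r m : ℕ) :
    ∑ j ∈ Jset r m, ∏ k : Fin r, (j k : ℝ)
      = ((m + 1).descFactorial (2 * r) : ℝ) / (2 ^ r * (r.factorial : ℝ)) := by
  induction r generalizing m with
  | zero => simp [Jset]
  | succ r ih =>
    induction m using Nat.twoStepInduction with
    | zero =>
      simp [Jset_succ_zero, Nat.descFactorial_eq_zero_iff_lt.mpr (by omega : 1 < 2 * (r + 1))]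
    | one =>
      rcases r with _ | r
      · simp [Jset_one_one, Nat.descFactorial]
      · simp [Jset_add_two_one, Nat.descFactorial_of_lt]
    | more m _ ihm =>
      have hfalling : (m + 3).descFactorial (2 * r + 2)
          = (m + 2).descFactorial (2 * r + 2)
            + (2 * r + 2) * ((m + 2) * (m + 1).descFactorial (2 * r)) := by
        rw [Nat.succ_descFactorial_succ_eq_add, Nat.succ_descFactorial_succ (m + 1) (2 * r)]
      rw [sum_prod_Jset_add_two, ihm, ih m, mul_add, hfalling, Nat.factorial_succ]
      push_cast
      field_simp
      ring

/-- Lemma (`LA`): `Σ_{J_{r,m}} ∏_k j_k = (m+1)_{2r} / (2^r r!)`, where `(x)_t`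
is the falling factorial. -/
theorem stmt5 (r m : ℕ) (hr : 1 ≤ r) :
    ∑ j ∈ Jset r m, ∏ k : Fin r, (j k : ℝ)
      = ((m + 1).descFactorial (2 * r) : ℝ) / (2 ^ r * (r.factorial : ℝ)) :=
  stmt5_general r m
end

section
/- Let n ≥ 1, α, β > 0, a = 1/α, b = 1/β, and let 1 ≤ j_1 < j_2 < … < j_r ≤ n−1 be indices satisfying j_k ≤ j_{k+1} − 2 for all k = 1, …, r−1. Then P( S_{n,α,β}(j_1) ≠ empty, …, S_{n,α,β}(j_r) ≠ empty ) = ∏_{k=1}^{r} 1 / ( n + a + b − r + k − 1 ). -/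
section Dev
open Finset
open scoped Classical

noncomputable def colwt (α β : ℝ) {n : ℕ} (c : Fin n → Option ABSymbol) : ℝ :=
  α ^ (univ.filter (fun i => c i = some ABSymbol.A)).card *
  β ^ (univ.filter (fun i => c i = some ABSymbol.B)).card

def bfreeSet (n : ℕ) (f : Fin n → Fin n → Option ABSymbol) : Finset (Fin n) :=
  univ.filter (fun i => ∀ j, f i j ≠ some ABSymbol.B)

def join (m : ℕ) (g : Fin m → Fin m → Option ABSymbol) (c : Fin (m+1) → Option ABSymbol) :
    Fin (m+1) → Fin (m+1) → Option ABSymbol :=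
  fun i => Fin.cons (c i) (fun j : Fin m => if h : (i : ℕ) < m then g ⟨i, h⟩ j else none)

def gOf (m : ℕ) (f : Fin (m+1) → Fin (m+1) → Option ABSymbol) :
    Fin m → Fin m → Option ABSymbol :=
  fun a b => f a.castSucc b.succ

def cOf (m : ℕ) (f : Fin (m+1) → Fin (m+1) → Option ABSymbol) :
    Fin (m+1) → Option ABSymbol :=
  fun i => f i 0

def Valid (m : ℕ) (R : Finset (Fin m)) (c : Fin (m+1) → Option ABSymbol) : Prop :=
  c (Fin.last m) ≠ none ∧
  (∀ i i' : Fin (m+1), c i = some ABSymbol.A → i' < i → c i' = none) ∧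
  (∀ i : Fin m, c i.castSucc ≠ none → i ∈ R)

@[simp] lemma join_zero (m : ℕ) g c (i : Fin (m+1)) : join m g c i 0 = c i := rfl

@[simp] lemma join_succ (m : ℕ) g c (i : Fin (m+1)) (j : Fin m) :
    join m g c i j.succ = if h : (i : ℕ) < m then g ⟨i, h⟩ j else none := by
  simp [join]

lemma staircase_split (m : ℕ) (f : Fin (m+1) → Fin (m+1) → Option ABSymbol)
    (hf : IsABStaircase (m+1) f) :
    IsABStaircase m (gOf m f) ∧ Valid m (bfreeSet m (gOf m f)) (cOf m f) := by
  obtain ⟨h1, h2, h3, h4⟩ := hf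
  constructor
  · refine ⟨?_, ?_, ?_, ?_⟩
    · intro i j hij
      exact h1 i.castSucc j.succ (by simp [Fin.val_succ]; omega)
    · intro i j i' hA hlt
      exact h2 i.castSucc j.succ i'.castSucc hA (Fin.castSucc_lt_castSucc_iff.mpr hlt)
    · intro i j j' hB hlt
      exact h3 i.castSucc j.succ j'.succ hB (Fin.succ_lt_succ_iff.mpr hlt)
    · intro i j hdiag
      exact h4 i.castSucc j.succ (by simp [Fin.val_succ]; omega)
  · refine ⟨?_, ?_, ?_⟩
    · exact h4 (Fin.last m) 0 (by simp [Fin.last])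
    · intro i i' hA hlt
      exact h2 i 0 i' hA hlt
    · intro i hne
      simp only [bfreeSet, mem_filter, mem_univ, true_and]
      intro b hb
      have := h3 i.castSucc b.succ 0 hb b.succ_pos
      exact hne this

lemma staircase_join (m : ℕ) (g : Fin m → Fin m → Option ABSymbol)
    (c : Fin (m+1) → Option ABSymbol) (hg : IsABStaircase m g)
    (hc : Valid m (bfreeSet m g) c) : IsABStaircase (m+1) (join m g c) := by
  obtain ⟨g1, g2, g3, g4⟩ := hg
  obtain ⟨v1, v2, v3⟩ := hc
  refine ⟨?_, ?_, ?_, ?_⟩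
  · intro i j hij
    induction j using Fin.cases with
    | zero => exfalso; rw [Fin.val_zero] at hij; have := i.isLt; omega
    | succ b =>
      simp only [join_succ]
      split
      · next h => exact g1 ⟨i, h⟩ b (by simp [Fin.val_succ] at hij ⊢; omega)
      · rfl
  · intro i j i' hA hlt
    induction j using Fin.cases with
    | zero => exact v2 i i' hA hlt
    | succ b =>
      simp only [join_succ] at hA ⊢
      split at hA
      · next h =>
        have hi' : (i' : ℕ) < m := lt_trans (by exact_mod_cast hlt) h
        rw [dif_pos hi']
        exact g2 ⟨i, h⟩ b ⟨i', hi'⟩ hA (by rw [Fin.lt_def] at hlt ⊢; exact hlt)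
      · exact absurd hA (by simp)
  · intro i j j' hB hlt
    induction j using Fin.cases with
    | zero => exact absurd hlt (Fin.not_lt_zero j')
    | succ b =>
      simp only [join_succ] at hB
      split at hB
      · next h =>
        induction j' using Fin.cases with
        | zero =>
          simp only [join_zero]
          by_contra hne
          have hmem := v3 ⟨i, h⟩ (by simpa using hne)
          simp only [bfreeSet, mem_filter] at hmem
          exact hmem.2 b hB
        | succ b' =>
          simp only [join_succ, dif_pos h]
          exact g3 ⟨i, h⟩ b b' hB (Fin.succ_lt_succ_iff.mp hlt)
      · exact absurd hB (by simp)
  · intro i j hdiag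
    induction j using Fin.cases with
    | zero =>
      have : i = Fin.last m := by
        apply Fin.ext; simp at hdiag ⊢; omega
      simpa [this] using v1
    | succ b =>
      have h : (i : ℕ) < m := by simp [Fin.val_succ] at hdiag; omega
      simp only [join_succ, dif_pos h]
      exact g4 ⟨i, h⟩ b (by simp [Fin.val_succ] at hdiag ⊢; omega)

lemma join_split (m : ℕ) (f : Fin (m+1) → Fin (m+1) → Option ABSymbol)
    (hf : IsABStaircase (m+1) f) : join m (gOf m f) (cOf m f) = f := by
  funext i j
  induction j using Fin.cases with
  | zero => rfl
  | succ b =>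
    simp only [join_succ]
    split
    · next h =>
      show f (Fin.castSucc ⟨i, h⟩) b.succ = f i b.succ
      congr 1
    · next h =>
      have hi : (i : ℕ) = m := by have := i.isLt; omega
      exact (hf.1 i b.succ (by simp [Fin.val_succ]; omega)).symm

lemma gOf_join (m : ℕ) (g : Fin m → Fin m → Option ABSymbol) (c : Fin (m+1) → Option ABSymbol) :
    gOf m (join m g c) = g := by
  funext a b
  show join m g c a.castSucc b.succ = g a b
  simp only [join_succ]
  rw [dif_pos (by simpa using a.isLt)]
  congr 1

lemma cOf_join (m : ℕ) (g : Fin m → Fin m → Option ABSymbol) (c : Fin (m+1) → Option ABSymbol) :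
    cOf m (join m g c) = c := rfl

lemma split_sum (m : ℕ) (w : (Fin (m+1) → Fin (m+1) → Option ABSymbol) → ℝ) :
    ∑ f ∈ univ.filter (fun f => IsABStaircase (m+1) f), w f
    = ∑ g ∈ univ.filter (fun g : Fin m → Fin m → Option ABSymbol => IsABStaircase m g),
        ∑ c ∈ univ.filter (fun c : Fin (m+1) → Option ABSymbol => Valid m (bfreeSet m g) c),
          w (join m g c) := by
  rw [Finset.sum_sigma']
  refine Finset.sum_nbij' (fun f => ⟨gOf m f, cOf m f⟩) (fun x => join m x.1 x.2) ?_ ?_ ?_ ?_ ?_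
  · intro f hf
    simp only [mem_filter, mem_univ, true_and] at hf
    obtain ⟨hg, hc⟩ := staircase_split m f hf
    simp only [Finset.mem_sigma, mem_filter, mem_univ, true_and]
    exact ⟨hg, hc⟩
  · intro x hx
    simp only [Finset.mem_sigma, mem_filter, mem_univ, true_and] at hx
    simp only [mem_filter, mem_univ, true_and]
    exact staircase_join m x.1 x.2 hx.1 hx.2
  · intro f hf
    simp only [mem_filter, mem_univ, true_and] at hf
    exact join_split m f hf
  · intro x hx
    exact Sigma.ext (gOf_join m x.1 x.2) (heq_of_eq (cOf_join m x.1 x.2))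
  · intro f hf
    simp only [mem_filter, mem_univ, true_and] at hf
    rw [join_split m f hf]

lemma count_join (m : ℕ) (g : Fin m → Fin m → Option ABSymbol)
    (c : Fin (m+1) → Option ABSymbol) (s : ABSymbol) :
    (univ.filter (fun p : Fin (m+1) × Fin (m+1) => join m g c p.1 p.2 = some s)).card
    = (univ.filter (fun i : Fin (m+1) => c i = some s)).card
      + (univ.filter (fun p : Fin m × Fin m => g p.1 p.2 = some s)).card := by
  rw [Finset.card_filter, Finset.card_filter, Finset.card_filter,
    Fintype.sum_prod_type, Fintype.sum_prod_type]
  have key : ∀ i : Fin (m+1),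
      (∑ j : Fin (m+1), if join m g c i j = some s then (1:ℕ) else 0)
      = (if c i = some s then 1 else 0)
        + (if h : (i:ℕ) < m then ∑ b : Fin m, (if g ⟨i, h⟩ b = some s then (1:ℕ) else 0)
           else 0) := by
    intro i
    rw [Fin.sum_univ_succ]
    congr 1
    by_cases h : (i:ℕ) < m
    · rw [dif_pos h]
      refine Finset.sum_congr rfl fun b _ => ?_
      rw [join_succ, dif_pos h]
    · rw [dif_neg h]
      refine Finset.sum_eq_zero fun b _ => ?_
      rw [join_succ, dif_neg h]
      simp
  rw [Finset.sum_congr rfl fun i _ => key i, Finset.sum_add_distrib]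
  congr 1
  rw [Fin.sum_univ_castSucc]
  have hlast : (if h : ((Fin.last m : Fin (m+1)):ℕ) < m then
      ∑ b : Fin m, (if g ⟨(Fin.last m : Fin (m+1)), h⟩ b = some s then (1:ℕ) else 0) else 0) = 0 := by
    rw [dif_neg]; simp [Fin.last]
  rw [hlast, add_zero]
  refine Finset.sum_congr rfl fun a _ => ?_
  rw [dif_pos (by simpa using a.isLt)]
  refine Finset.sum_congr rfl fun b _ => ?_
  congr 2

lemma wt_join (α β : ℝ) (m : ℕ) (g : Fin m → Fin m → Option ABSymbol)
    (c : Fin (m+1) → Option ABSymbol) :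
    wt α β (m+1) (join m g c) = wt α β m g * colwt α β c := by
  have hA := count_join m g c ABSymbol.A
  have hB := count_join m g c ABSymbol.B
  simp only [wt, NA, NB, colwt, hA, hB, pow_add]
  ring

lemma row_join_iff (m : ℕ) (g : Fin m → Fin m → Option ABSymbol)
    (c : Fin (m+1) → Option ABSymbol) (a : Fin m) :
    (∀ j, join m g c a.castSucc j ≠ some ABSymbol.B)
      ↔ ((∀ b, g a b ≠ some ABSymbol.B) ∧ c a.castSucc ≠ some ABSymbol.B) := by
  constructor
  · intro h
    refine ⟨fun b hb => ?_, h 0⟩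
    have := h b.succ
    rw [join_succ, dif_pos (by simpa using a.isLt)] at this
    apply this
    rw [← hb]
    congr 1
  · rintro ⟨h1, h2⟩ j
    induction j using Fin.cases with
    | zero => exact h2
    | succ b =>
      rw [join_succ]
      split
      · next h =>
        rw [show (⟨((a.castSucc : Fin (m+1)) : ℕ), h⟩ : Fin m) = a from Fin.ext (by simp)]
        exact h1 b
      · simp
  
lemma row_join_last (m : ℕ) (g : Fin m → Fin m → Option ABSymbol)
    (c : Fin (m+1) → Option ABSymbol) :
    (∀ j, join m g c (Fin.last m) j ≠ some ABSymbol.B) ↔ c (Fin.last m) ≠ some ABSymbol.B := by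
  constructor
  · intro h; exact h 0
  · intro h j
    induction j using Fin.cases with
    | zero => exact h
    | succ b =>
      rw [join_succ, dif_neg (by simp [Fin.last])]
      simp

lemma bf_join (m : ℕ) (g : Fin m → Fin m → Option ABSymbol)
    (c : Fin (m+1) → Option ABSymbol) :
    (bfreeSet (m+1) (join m g c)).card
    = ((bfreeSet m g).filter (fun i => c i.castSucc ≠ some ABSymbol.B)).card
      + (if c (Fin.last m) ≠ some ABSymbol.B then 1 else 0) := by
  have h1 : ((bfreeSet m g).filter (fun i => c i.castSucc ≠ some ABSymbol.B))
      = univ.filter (fun a : Fin m =>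
          (∀ b, g a b ≠ some ABSymbol.B) ∧ c a.castSucc ≠ some ABSymbol.B) := by
    rw [bfreeSet, Finset.filter_filter]
  rw [h1, bfreeSet, Finset.card_filter, Finset.card_filter, Fin.sum_univ_castSucc]
  congr 1
  · refine Finset.sum_congr rfl fun a _ => ?_
    rw [if_congr (row_join_iff m g c a) rfl rfl]
  · rw [if_congr (row_join_last m g c) rfl rfl]

lemma diag2_join_ge2 (m : ℕ) (g : Fin m → Fin m → Option ABSymbol)
    (c : Fin (m+1) → Option ABSymbol) (x : ℕ) (h2 : 2 ≤ x) (hxm : x ≤ m) :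
    diag2 (join m g c) x = diag2 g (x-1) := by
  rw [diag2, diag2, dif_pos ⟨by omega, by omega⟩, dif_pos ⟨by omega, by omega⟩]
  have hx1 : (⟨x - 1, by omega⟩ : Fin (m+1)) = (⟨x - 2, by omega⟩ : Fin m).succ :=
    Fin.ext (by simp [Fin.val_succ]; omega)
  rw [hx1, join_succ, dif_pos (by simp; omega)]
  congr 1 <;> exact Fin.ext (by simp; omega)

lemma diag2_join_one (m : ℕ) (hm : 1 ≤ m) (g : Fin m → Fin m → Option ABSymbol)
    (c : Fin (m+1) → Option ABSymbol) :
    diag2 (join m g c) 1 = c ⟨m - 1, by omega⟩ := by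
  rw [diag2, dif_pos ⟨le_refl 1, by omega⟩]
  show join m g c ⟨m + 1 - 1 - 1, _⟩ ⟨0, _⟩ = _
  have h0 : (⟨0, by omega⟩ : Fin (m+1)) = 0 := rfl
  rw [h0, join_zero]
  congr 1

def Gap (J : Finset ℕ) : Prop := ∀ x ∈ J, ∀ y ∈ J, x < y → x + 2 ≤ y

lemma gap_image_sub (J : Finset ℕ) (h1 : ∀ x ∈ J, 1 ≤ x) (hg : Gap J) :
    Gap (J.image (· - 1)) := by
  intro x hx y hy hxy
  simp only [mem_image] at hx hy
  obtain ⟨x', hx', rfl⟩ := hx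
  obtain ⟨y', hy', rfl⟩ := hy
  have := h1 x' hx'
  have := h1 y' hy'
  have := hg x' hx' y' hy'
  omega

lemma card_image_sub (J : Finset ℕ) (h1 : ∀ x ∈ J, 1 ≤ x) :
    (J.image (· - 1)).card = J.card := by
  rw [Finset.card_image_of_injOn]
  intro x hx y hy hxy
  have := h1 x hx
  have := h1 y hy
  simp at hxy
  omega

lemma ev_join (m : ℕ) (g : Fin m → Fin m → Option ABSymbol)
    (c : Fin (m+1) → Option ABSymbol) (J : Finset ℕ) (hJ : ∀ x ∈ J, 2 ≤ x ∧ x ≤ m) :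
    (∀ x ∈ J, diag2 (join m g c) x ≠ none) ↔ (∀ y ∈ J.image (· - 1), diag2 g y ≠ none) := by
  constructor
  · intro h y hy
    simp only [mem_image] at hy
    obtain ⟨x, hx, rfl⟩ := hy
    rw [← diag2_join_ge2 m g c x (hJ x hx).1 (hJ x hx).2]
    exact h x hx
  · intro h x hx
    rw [diag2_join_ge2 m g c x (hJ x hx).1 (hJ x hx).2]
    exact h (x-1) (Finset.mem_image_of_mem _ hx)

def inSupp (m : ℕ) (S : Finset (Fin m)) (i : Fin (m+1)) : Prop :=
  i = Fin.last m ∨ ∃ a ∈ S, a.castSucc = i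

def topIdx (m : ℕ) (S : Finset (Fin m)) : Fin (m+1) :=
  if h : S.Nonempty then (S.min' h).castSucc else Fin.last m

noncomputable def build (m : ℕ) (S : Finset (Fin m)) (s : ABSymbol) :
    Fin (m+1) → Option ABSymbol :=
  fun i => if i = topIdx m S then some s
    else if inSupp m S i then some ABSymbol.B else none

lemma inSupp_top (m : ℕ) (S : Finset (Fin m)) : inSupp m S (topIdx m S) := by
  rw [topIdx]
  split
  · next h => exact Or.inr ⟨S.min' h, S.min'_mem h, rfl⟩
  · exact Or.inl rfl

lemma castSucc_lt_last {m : ℕ} (a : Fin m) : a.castSucc < Fin.last m := by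
  rw [Fin.lt_def]; simpa using a.isLt

lemma lt_top_not_inSupp (m : ℕ) (S : Finset (Fin m)) (i : Fin (m+1))
    (hlt : i < topIdx m S) : ¬ inSupp m S i := by
  rw [topIdx] at hlt
  rintro (rfl | ⟨a, haS, rfl⟩)
  · split at hlt
    · exact absurd (lt_trans hlt (castSucc_lt_last _)) (lt_irrefl _)
    · exact absurd hlt (lt_irrefl _)
  · split at hlt
    · next h =>
      have : a < S.min' h := by rwa [Fin.castSucc_lt_castSucc_iff] at hlt
      exact absurd (S.min'_le a haS) (not_le.mpr this)
    · next h => exact absurd ⟨a, haS⟩ h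

lemma inSupp_castSucc (m : ℕ) (S : Finset (Fin m)) (a : Fin m) :
    inSupp m S a.castSucc ↔ a ∈ S := by
  constructor
  · rintro (h | ⟨a', ha', heq⟩)
    · exact absurd h (Fin.ne_of_lt (castSucc_lt_last a))
    · rwa [← Fin.castSucc_injective m heq]
  · intro h; exact Or.inr ⟨a, h, rfl⟩

lemma build_ne_none_iff (m : ℕ) (S : Finset (Fin m)) (s : ABSymbol) (i : Fin (m+1)) :
    build m S s i ≠ none ↔ inSupp m S i := by
  rw [build]
  by_cases h : i = topIdx m S
  · simp only [if_pos h]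
    constructor
    · intro _; rw [h]; exact inSupp_top m S
    · intro _; simp
  · rw [if_neg h]
    by_cases h2 : inSupp m S i
    · simp [h2]
    · simp [h2]

lemma build_eq_A_iff (m : ℕ) (S : Finset (Fin m)) (s : ABSymbol) (i : Fin (m+1)) :
    build m S s i = some ABSymbol.A ↔ (i = topIdx m S ∧ s = ABSymbol.A) := by
  rw [build]
  by_cases h : i = topIdx m S
  · rw [if_pos h]
    constructor
    · intro hs; exact ⟨h, Option.some_injective _ hs⟩
    · rintro ⟨-, rfl⟩; rfl
  · rw [if_neg h]
    constructor
    · intro hs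
      split at hs
      · exact absurd (Option.some_injective _ hs) (by simp)
      · exact absurd hs (by simp)
    · rintro ⟨hh, -⟩; exact absurd hh h

lemma build_valid (m : ℕ) (R : Finset (Fin m)) (S : Finset (Fin m)) (hS : S ⊆ R)
    (s : ABSymbol) : Valid m R (build m S s) := by
  refine ⟨?_, ?_, ?_⟩
  · rw [build_ne_none_iff]
    exact Or.inl rfl
  · intro i i' hA hlt
    have hi : i = topIdx m S := (build_eq_A_iff m S s i).mp hA |>.1
    have hns : ¬ inSupp m S i' := lt_top_not_inSupp m S i' (hi ▸ hlt)
    rw [build, if_neg (Fin.ne_of_lt (hi ▸ hlt)), if_neg hns]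
  · intro a ha
    rw [build_ne_none_iff, inSupp_castSucc] at ha
    exact hS ha

noncomputable def sof {m : ℕ} (c : Fin (m+1) → Option ABSymbol) : ABSymbol :=
  if ∃ i, c i = some ABSymbol.A then ABSymbol.A else ABSymbol.B

def Sof {m : ℕ} (c : Fin (m+1) → Option ABSymbol) : Finset (Fin m) :=
  univ.filter (fun a : Fin m => c a.castSucc ≠ none)

lemma valid_supp_iff {m : ℕ} {R : Finset (Fin m)} {c : Fin (m+1) → Option ABSymbol}
    (hc : Valid m R c) (i : Fin (m+1)) : c i ≠ none ↔ inSupp m (Sof c) i := by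
  constructor
  · intro h
    by_cases hl : i = Fin.last m
    · exact Or.inl hl
    · have hlt : (i : ℕ) < m := by
        have := i.isLt
        by_contra hn
        exact hl (Fin.ext (by simp [Fin.last]; omega))
      refine Or.inr ⟨⟨i, hlt⟩, ?_, Fin.ext rfl⟩
      rw [Sof, mem_filter]
      refine ⟨mem_univ _, ?_⟩
      have : (⟨i, hlt⟩ : Fin m).castSucc = i := Fin.ext rfl
      rwa [this]
  · rintro (rfl | ⟨a, haS, rfl⟩)
    · exact hc.1
    · rw [Sof, mem_filter] at haS
      exact haS.2

lemma valid_top_eq {m : ℕ} {R : Finset (Fin m)} {c : Fin (m+1) → Option ABSymbol}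
    (hc : Valid m R c) (i₀ : Fin (m+1)) (h₀ : c i₀ = some ABSymbol.A) :
    topIdx m (Sof c) = i₀ := by
  have hsupp : inSupp m (Sof c) i₀ := (valid_supp_iff hc i₀).mp (by simp [h₀])
  have htop : c (topIdx m (Sof c)) ≠ none :=
    (valid_supp_iff hc _).mpr (inSupp_top m (Sof c))
  rcases lt_trichotomy (topIdx m (Sof c)) i₀ with h | h | h
  · exact absurd (hc.2.1 i₀ _ h₀ h) htop
  · exact h
  · exact absurd hsupp (lt_top_not_inSupp m (Sof c) i₀ h)

lemma build_sof_eq {m : ℕ} {R : Finset (Fin m)} {c : Fin (m+1) → Option ABSymbol}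
    (hc : Valid m R c) : build m (Sof c) (sof c) = c := by
  funext i
  have hsupp := valid_supp_iff hc
  by_cases ht : i = topIdx m (Sof c)
  · rw [build, if_pos ht]
    have hne : c i ≠ none := (hsupp i).mpr (ht ▸ inSupp_top m (Sof c))
    rw [sof]
    split
    · next h =>
      obtain ⟨i₀, hi₀⟩ := h
      have := valid_top_eq hc i₀ hi₀
      rw [ht, this, hi₀]
    · next h =>
      push_neg at h
      rcases ho : c i with _ | s'
      · exact absurd ho hne
      · cases s'
        · exact absurd ho (h i)
        · rfl
  · rw [build, if_neg ht]
    by_cases h2 : inSupp m (Sof c) i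
    · rw [if_pos h2]
      have hne : c i ≠ none := (hsupp i).mpr h2
      rcases ho : c i with _ | s'
      · exact absurd ho hne
      · cases s'
        · exact absurd (valid_top_eq hc i ho).symm ht
        · rfl
    · rw [if_neg h2]
      by_contra hne
      exact h2 ((hsupp i).mp (fun h => hne h.symm))

lemma Sof_build (m : ℕ) (S : Finset (Fin m)) (s : ABSymbol) : Sof (build m S s) = S := by
  ext a
  rw [Sof, mem_filter]
  simp only [mem_univ, true_and]
  rw [build_ne_none_iff, inSupp_castSucc]

lemma sof_build (m : ℕ) (S : Finset (Fin m)) (s : ABSymbol) : sof (build m S s) = s := by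
  rw [sof]
  cases s
  · rw [if_pos ⟨topIdx m S, by rw [build, if_pos rfl]⟩]
  · rw [if_neg]
    push_neg
    intro i
    rw [build]
    split
    · simp
    · split <;> simp

lemma param_sum (m : ℕ) (R : Finset (Fin m)) (W : (Fin (m+1) → Option ABSymbol) → ℝ) :
    ∑ c ∈ univ.filter (fun c : Fin (m+1) → Option ABSymbol => Valid m R c), W c
    = ∑ S ∈ R.powerset, ∑ s : ABSymbol, W (build m S s) := by
  rw [Finset.sum_sigma']
  refine Finset.sum_nbij' (fun c => ⟨Sof c, sof c⟩) (fun x => build m x.1 x.2) ?_ ?_ ?_ ?_ ?_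
  · intro c hc
    simp only [mem_filter, mem_univ, true_and] at hc
    simp only [Finset.mem_sigma, Finset.mem_powerset, mem_univ, and_true]
    intro a ha
    simp only [Sof, mem_filter] at ha
    exact hc.2.2 a ha.2
  · intro x hx
    simp only [Finset.mem_sigma, Finset.mem_powerset] at hx
    simp only [mem_filter, mem_univ, true_and]
    exact build_valid m R x.1 hx.1 x.2
  · intro c hc
    simp only [mem_filter, mem_univ, true_and] at hc
    show build m (Sof c) (sof c) = c
    exact build_sof_eq hc
  · intro x hx
    simp only [Finset.mem_sigma, Finset.mem_powerset] at hx
    show (⟨Sof (build m x.1 x.2), sof (build m x.1 x.2)⟩ : Σ _ : Finset (Fin m), ABSymbol) = x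
    rw [Sof_build, sof_build]
  · intro c hc
    simp only [mem_filter, mem_univ, true_and] at hc
    rw [build_sof_eq hc]

lemma build_eq_B_iff (m : ℕ) (S : Finset (Fin m)) (s : ABSymbol) (i : Fin (m+1)) :
    build m S s i = some ABSymbol.B
      ↔ ((i = topIdx m S ∧ s = ABSymbol.B) ∨ (i ≠ topIdx m S ∧ inSupp m S i)) := by
  rw [build]
  by_cases h : i = topIdx m S
  · rw [if_pos h]
    constructor
    · intro hs; exact Or.inl ⟨h, Option.some_injective _ hs⟩
    · rintro (⟨-, rfl⟩ | ⟨hne, -⟩)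
      · rfl
      · exact absurd h hne
  · rw [if_neg h]
    by_cases h2 : inSupp m S i
    · simp [h2, h]
    · simp [h2, h]

lemma suppFilter_eq (m : ℕ) (S : Finset (Fin m)) :
    univ.filter (fun i => inSupp m S i) = insert (Fin.last m) (S.image Fin.castSucc) := by
  ext i
  rw [Finset.mem_filter]
  simp only [mem_filter, mem_univ, true_and, mem_insert, mem_image, inSupp]

lemma suppFilter_card (m : ℕ) (S : Finset (Fin m)) :
    (univ.filter (fun i => inSupp m S i)).card = S.card + 1 := by
  rw [suppFilter_eq, Finset.card_insert_of_notMem, Finset.card_image_of_injective _ (Fin.castSucc_injective m)]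
  intro h
  obtain ⟨a, -, ha⟩ := Finset.mem_image.mp h
  exact Fin.ne_of_lt (castSucc_lt_last a) ha

lemma top_mem_suppFilter (m : ℕ) (S : Finset (Fin m)) :
    topIdx m S ∈ univ.filter (fun i => inSupp m S i) := by
  rw [mem_filter]; exact ⟨mem_univ _, inSupp_top m S⟩

lemma colwt_build (α β : ℝ) (m : ℕ) (S : Finset (Fin m)) (s : ABSymbol) :
    colwt α β (build m S s) = (if s = ABSymbol.A then α else β) * β ^ S.card := by
  rw [colwt]
  cases s
  · have hA : univ.filter (fun i => build m S ABSymbol.A i = some ABSymbol.A) = {topIdx m S} := by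
      ext i
      simp only [mem_filter, mem_univ, true_and, mem_singleton, build_eq_A_iff, and_true]
    have hB : univ.filter (fun i => build m S ABSymbol.A i = some ABSymbol.B)
        = (univ.filter (fun i => inSupp m S i)).erase (topIdx m S) := by
      ext i
      simp only [mem_filter, mem_univ, true_and, mem_erase, build_eq_B_iff]
      constructor
      · rintro (⟨-, h⟩ | ⟨h1, h2⟩)
        · exact absurd h (by simp)
        · exact ⟨h1, h2⟩
      · rintro ⟨h1, h2⟩; exact Or.inr ⟨h1, h2⟩
    rw [hA, hB, Finset.card_singleton, Finset.card_erase_of_mem (top_mem_suppFilter m S),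
      suppFilter_card]
    simp
  · have hA : univ.filter (fun i => build m S ABSymbol.B i = some ABSymbol.A) = ∅ := by
      ext i
      simp only [mem_filter, mem_univ, true_and, notMem_empty, iff_false, build_eq_A_iff]
      rintro ⟨-, h⟩; exact absurd h (by simp)
    have hB : univ.filter (fun i => build m S ABSymbol.B i = some ABSymbol.B)
        = univ.filter (fun i => inSupp m S i) := by
      ext i
      simp only [mem_filter, mem_univ, true_and, build_eq_B_iff]
      constructor
      · rintro (⟨h, -⟩ | ⟨-, h⟩)
        · exact h ▸ inSupp_top m S
        · exact h
      · intro h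
        by_cases ht : i = topIdx m S
        · exact Or.inl ⟨ht, by trivial⟩
        · exact Or.inr ⟨ht, h⟩
    rw [hA, hB, Finset.card_empty, suppFilter_card]
    simp [pow_succ]
    ring

lemma topIdx_empty (m : ℕ) : topIdx m (∅ : Finset (Fin m)) = Fin.last m := by
  rw [topIdx, dif_neg (by simp)]

lemma topIdx_nonempty (m : ℕ) (S : Finset (Fin m)) (h : S.Nonempty) :
    topIdx m S = (S.min' h).castSucc := by
  rw [topIdx, dif_pos h]

lemma build_last_val (m : ℕ) (S : Finset (Fin m)) (s : ABSymbol) :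
    build m S s (Fin.last m) = if S = ∅ then some s else some ABSymbol.B := by
  by_cases hS : S = ∅
  · rw [if_pos hS, build, if_pos]
    rw [hS, topIdx_empty]
  · have hne : S.Nonempty := Finset.nonempty_iff_ne_empty.mpr hS
    rw [if_neg hS, build, if_neg, if_pos (show inSupp m S (Fin.last m) from Or.inl rfl)]
    rw [topIdx_nonempty m S hne]
    exact (Fin.ne_of_lt (castSucc_lt_last _)).symm

lemma build_castSucc_B_eq_B_iff (m : ℕ) (S : Finset (Fin m)) (a : Fin m) :
    build m S ABSymbol.B a.castSucc = some ABSymbol.B ↔ a ∈ S := by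
  rw [build_eq_B_iff]
  constructor
  · rintro (⟨h, -⟩ | ⟨-, h⟩)
    · rw [← inSupp_castSucc m S a, h]; exact inSupp_top m S
    · rwa [inSupp_castSucc] at h
  · intro h
    by_cases ht : a.castSucc = topIdx m S
    · exact Or.inl ⟨ht, rfl⟩
    · exact Or.inr ⟨ht, (inSupp_castSucc m S a).mpr h⟩

lemma build_castSucc_A_ne_B_iff (m : ℕ) (S : Finset (Fin m)) (hS : S.Nonempty) (a : Fin m) :
    build m S ABSymbol.A a.castSucc ≠ some ABSymbol.B ↔ (a ∉ S ∨ a = S.min' hS) := by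
  rw [Ne, build_eq_B_iff]
  have htop : topIdx m S = (S.min' hS).castSucc := topIdx_nonempty m S hS
  constructor
  · intro h
    by_cases haS : a ∈ S
    · right
      by_contra hne
      apply h
      refine Or.inr ⟨?_, (inSupp_castSucc m S a).mpr haS⟩
      rw [htop]
      intro hc
      exact hne (Fin.castSucc_injective m hc)
    · exact Or.inl haS
  · rintro (h | rfl)
    · rintro (⟨-, hAB⟩ | ⟨-, hsupp⟩)
      · exact absurd hAB (by simp)
      · exact h ((inSupp_castSucc m S a).mp hsupp)
    · rintro (⟨-, hAB⟩ | ⟨hne, -⟩)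
      · exact absurd hAB (by simp)
      · exact hne htop.symm

lemma expo_build (m : ℕ) (R S : Finset (Fin m)) (hS : S ⊆ R) (s : ABSymbol) :
    ((R.filter (fun i => build m S s i.castSucc ≠ some ABSymbol.B)).card
      + if build m S s (Fin.last m) ≠ some ABSymbol.B then 1 else 0)
    = (R \ S).card + (if s = ABSymbol.A then 1 else 0) := by
  cases s
  · by_cases hSe : S = ∅
    · subst hSe
      have h1 : R.filter (fun i => build m ∅ ABSymbol.A i.castSucc ≠ some ABSymbol.B) = R := by
        refine Finset.filter_true_of_mem fun a _ => ?_
        rw [build, if_neg, if_neg]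
        · simp
        · rw [inSupp_castSucc]; exact notMem_empty a
        · rw [topIdx_empty]; exact Fin.ne_of_lt (castSucc_lt_last a)
      rw [h1, build_last_val, if_pos rfl, if_pos (by simp), Finset.sdiff_empty, if_pos rfl]
    · have hne : S.Nonempty := Finset.nonempty_iff_ne_empty.mpr hSe
      have h1 : R.filter (fun i => build m S ABSymbol.A i.castSucc ≠ some ABSymbol.B)
          = insert (S.min' hne) (R \ S) := by
        ext a
        rw [mem_filter, build_castSucc_A_ne_B_iff m S hne, Finset.mem_insert, Finset.mem_sdiff]
        constructor
        · rintro ⟨haR, h | h⟩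
          · exact Or.inr ⟨haR, h⟩
          · exact Or.inl h
        · rintro (rfl | ⟨haR, h⟩)
          · exact ⟨hS (S.min'_mem hne), Or.inr rfl⟩
          · exact ⟨haR, Or.inl h⟩
      rw [h1, Finset.card_insert_of_notMem (by simp [Finset.mem_sdiff, S.min'_mem hne]),
        build_last_val, if_neg hSe, if_neg (by simp), if_pos rfl]
  · have h1 : R.filter (fun i => build m S ABSymbol.B i.castSucc ≠ some ABSymbol.B) = R \ S := by
      ext a
      rw [mem_filter, Finset.mem_sdiff, Ne, build_castSucc_B_eq_B_iff]
    rw [h1, build_last_val, ite_self, if_neg (by simp : ¬(some ABSymbol.B ≠ some ABSymbol.B)),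
      if_neg (by simp : ¬(ABSymbol.B = ABSymbol.A))]

noncomputable def expo {m : ℕ} (R : Finset (Fin m)) (c : Fin (m+1) → Option ABSymbol) : ℕ :=
  (R.filter (fun i => c i.castSucc ≠ some ABSymbol.B)).card
    + (if c (Fin.last m) ≠ some ABSymbol.B then 1 else 0)

lemma absum {M : Type*} [AddCommMonoid M] (F : ABSymbol → M) :
    ∑ s : ABSymbol, F s = F ABSymbol.A + F ABSymbol.B := by
  have h : (univ : Finset ABSymbol) = {ABSymbol.A, ABSymbol.B} := by
    ext x; cases x <;> simp
  rw [h, Finset.sum_insert (by simp), Finset.sum_singleton]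

lemma powerset_sum (β t : ℝ) {m : ℕ} (R : Finset (Fin m)) :
    ∑ S ∈ R.powerset, β ^ S.card * t ^ (R \ S).card = (t + β) ^ R.card := by
  have h := Finset.prod_add (fun _ : Fin m => β) (fun _ : Fin m => t) R
  simp only [Finset.prod_const] at h
  rw [← h, add_comm β t]

lemma expo_build' (m : ℕ) (R S : Finset (Fin m)) (hS : S ⊆ R) (s : ABSymbol) :
    expo R (build m S s) = (R \ S).card + (if s = ABSymbol.A then 1 else 0) :=
  expo_build m R S hS s

lemma build_term (α β t : ℝ) (m : ℕ) (R S : Finset (Fin m)) (hS : S ⊆ R) (s : ABSymbol) :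
    colwt α β (build m S s) * t ^ expo R (build m S s)
    = (if s = ABSymbol.A then α * t else β) * (β ^ S.card * t ^ (R \ S).card) := by
  rw [colwt_build, expo_build' m R S hS s]
  cases s
  · rw [if_pos (rfl : ABSymbol.A = ABSymbol.A), if_pos (rfl : ABSymbol.A = ABSymbol.A),
      pow_add, pow_one]
    split
    · ring
    · next h => exact absurd rfl h
  · rw [if_neg (by simp : ¬(ABSymbol.B = ABSymbol.A)), if_neg (by simp : ¬(ABSymbol.B = ABSymbol.A)),
      add_zero]
    split
    · next h => exact absurd h (by simp)
    · ring

lemma fiber_a (α β t : ℝ) (m : ℕ) (R : Finset (Fin m)) :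
    ∑ c ∈ univ.filter (fun c : Fin (m+1) → Option ABSymbol => Valid m R c),
      colwt α β c * t ^ expo R c
    = (α * t + β) * (t + β) ^ R.card := by
  rw [param_sum m R (fun c => colwt α β c * t ^ expo R c)]
  have step : ∀ S ∈ R.powerset,
      ∑ s : ABSymbol, colwt α β (build m S s) * t ^ expo R (build m S s)
      = (α * t + β) * (β ^ S.card * t ^ (R \ S).card) := by
    intro S hS
    rw [Finset.mem_powerset] at hS
    rw [Finset.sum_congr rfl (fun s _ => build_term α β t m R S hS s), absum,
      if_pos (rfl : ABSymbol.A = ABSymbol.A), if_neg (by simp : ¬(ABSymbol.B = ABSymbol.A))]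
    ring
  rw [Finset.sum_congr rfl step, ← Finset.mul_sum, powerset_sum]

lemma fiber_b (α β t : ℝ) (m : ℕ) (R : Finset (Fin m)) (p : Fin m) (hp : p ∈ R) :
    ∑ c ∈ univ.filter (fun c : Fin (m+1) → Option ABSymbol => Valid m R c),
      (if c p.castSucc ≠ none then colwt α β c * t ^ expo R c else 0)
    = (α * t + β) * β * (t + β) ^ (R.erase p).card := by
  rw [param_sum m R (fun c => if c p.castSucc ≠ none then colwt α β c * t ^ expo R c else 0)]
  have step : ∀ S ∈ R.powerset,
      ∑ s : ABSymbol,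
        (if build m S s p.castSucc ≠ none then
          colwt α β (build m S s) * t ^ expo R (build m S s) else 0)
      = if p ∈ S then (α * t + β) * (β ^ S.card * t ^ (R \ S).card) else 0 := by
    intro S hS
    rw [Finset.mem_powerset] at hS
    have hmem : ∀ s : ABSymbol, (build m S s p.castSucc ≠ none) ↔ p ∈ S := by
      intro s; rw [build_ne_none_iff, inSupp_castSucc]
    by_cases hpS : p ∈ S
    · rw [if_pos hpS]
      rw [Finset.sum_congr rfl (fun s _ => by rw [if_pos ((hmem s).mpr hpS),
        build_term α β t m R S hS s]), absum,
        if_pos (rfl : ABSymbol.A = ABSymbol.A), if_neg (by simp : ¬(ABSymbol.B = ABSymbol.A))]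
      ring
    · rw [if_neg hpS]
      exact Finset.sum_eq_zero fun s _ => by rw [if_neg (fun h => hpS ((hmem s).mp h))]
  rw [Finset.sum_congr rfl step, ← Finset.sum_filter]
  have hbij : ∑ S ∈ R.powerset.filter (fun S => p ∈ S),
      (α * t + β) * (β ^ S.card * t ^ (R \ S).card)
      = ∑ S' ∈ (R.erase p).powerset,
        (α * t + β) * β * (β ^ S'.card * t ^ ((R.erase p) \ S').card) := by
    refine Finset.sum_nbij' (fun S => S.erase p) (fun S' => insert p S') ?_ ?_ ?_ ?_ ?_
    · intro S hS
      rw [mem_filter, Finset.mem_powerset] at hS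
      rw [Finset.mem_powerset]
      exact Finset.erase_subset_erase p hS.1
    · intro S' hS'
      rw [Finset.mem_powerset] at hS'
      rw [mem_filter, Finset.mem_powerset]
      refine ⟨Finset.insert_subset hp (hS'.trans (Finset.erase_subset p R)), Finset.mem_insert_self p S'⟩
    · intro S hS
      rw [mem_filter] at hS
      exact Finset.insert_erase hS.2
    · intro S' hS'
      rw [Finset.mem_powerset] at hS'
      refine Finset.erase_insert fun hc => ?_
      exact absurd (hS' hc) (Finset.notMem_erase p R)
    · intro S hS
      rw [mem_filter, Finset.mem_powerset] at hS
      have hpS : p ∈ S := hS.2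
      have hcard : S.card = (S.erase p).card + 1 := by
        rw [Finset.card_erase_of_mem hpS]
        have := Finset.card_pos.mpr ⟨p, hpS⟩
        omega
      have hsd : R \ S = (R.erase p) \ (S.erase p) := by
        ext x
        simp only [Finset.mem_sdiff, Finset.mem_erase]
        constructor
        · rintro ⟨hxR, hxS⟩
          exact ⟨⟨fun he => hxS (he ▸ hpS), hxR⟩, fun hc => hxS hc.2⟩
        · rintro ⟨⟨hxp, hxR⟩, hxS⟩
          exact ⟨hxR, fun hc => hxS ⟨hxp, hc⟩⟩
      rw [hcard, hsd, pow_succ]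
      ring
  rw [hbij, ← Finset.mul_sum]
  rw [show ∀ X : ℝ, (α * t + β) * β * X = (α*t+β)*β*X from fun X => rfl]
  rw [powerset_sum]

lemma fiber_c (α β t : ℝ) (m : ℕ) (R : Finset (Fin m)) :
    ∑ c ∈ univ.filter (fun c : Fin (m+1) → Option ABSymbol => Valid m R c),
      (if c (Fin.last m) = some ABSymbol.A then colwt α β c * t ^ (expo R c - 1) else 0)
    = α * t ^ R.card := by
  rw [param_sum m R (fun c => if c (Fin.last m) = some ABSymbol.A then
      colwt α β c * t ^ (expo R c - 1) else 0)]
  have hlast : ∀ (S : Finset (Fin m)) (s : ABSymbol),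
      (build m S s (Fin.last m) = some ABSymbol.A) ↔ (S = ∅ ∧ s = ABSymbol.A) := by
    intro S s
    rw [build_last_val]
    by_cases hS : S = ∅
    · rw [if_pos hS]
      constructor
      · intro h; exact ⟨hS, Option.some_injective _ h⟩
      · rintro ⟨-, rfl⟩; rfl
    · rw [if_neg hS]
      constructor
      · intro h; exact absurd (Option.some_injective _ h) (by simp)
      · rintro ⟨h, -⟩; exact absurd h hS
  have step : ∀ S ∈ R.powerset,
      ∑ s : ABSymbol,
        (if build m S s (Fin.last m) = some ABSymbol.A then
          colwt α β (build m S s) * t ^ (expo R (build m S s) - 1) else 0)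
      = if S = ∅ then α * t ^ R.card else 0 := by
    intro S hS
    rw [Finset.mem_powerset] at hS
    rw [absum]
    by_cases hSe : S = ∅
    · subst hSe
      rw [if_pos ((hlast ∅ ABSymbol.A).mpr ⟨rfl, rfl⟩),
        if_neg (fun h => by simpa using ((hlast ∅ ABSymbol.B).mp h).2), if_pos rfl, add_zero]
      rw [colwt_build, expo_build' m R ∅ (Finset.empty_subset R) ABSymbol.A,
        if_pos (rfl : ABSymbol.A = ABSymbol.A), if_pos (rfl : ABSymbol.A = ABSymbol.A),
        Finset.card_empty, pow_zero, mul_one, Finset.sdiff_empty, Nat.add_sub_cancel]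
    · rw [if_neg hSe, if_neg (fun h => hSe ((hlast S ABSymbol.A).mp h).1),
        if_neg (fun h => hSe ((hlast S ABSymbol.B).mp h).1), add_zero]
  rw [Finset.sum_congr rfl step, Finset.sum_ite_eq' R.powerset ∅ (fun _ => α * t ^ R.card),
    if_pos (Finset.empty_mem_powerset R)]

noncomputable def ind (P : Prop) : ℝ := if P then 1 else 0

lemma ind_pos {P : Prop} (h : P) : ind P = 1 := if_pos h

lemma ind_neg {P : Prop} (h : ¬P) : ind P = 0 := if_neg h

lemma bf_join' (m : ℕ) (g : Fin m → Fin m → Option ABSymbol) (c : Fin (m+1) → Option ABSymbol) :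
    (bfreeSet (m+1) (join m g c)).card = expo (bfreeSet m g) c :=
  bf_join m g c

lemma inner_a (α β t : ℝ) (m : ℕ) (g : Fin m → Fin m → Option ABSymbol) :
    ∑ c ∈ univ.filter (fun c : Fin (m+1) → Option ABSymbol => Valid m (bfreeSet m g) c),
      wt α β (m+1) (join m g c) * t ^ (bfreeSet (m+1) (join m g c)).card
    = wt α β m g * ((α * t + β) * (t + β) ^ (bfreeSet m g).card) := by
  rw [← fiber_a α β t m (bfreeSet m g), Finset.mul_sum]
  refine Finset.sum_congr rfl fun c _ => ?_
  rw [wt_join, bf_join']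
  ring

lemma inner_c (α β t : ℝ) (m : ℕ) (g : Fin m → Fin m → Option ABSymbol) :
    ∑ c ∈ univ.filter (fun c : Fin (m+1) → Option ABSymbol => Valid m (bfreeSet m g) c),
      (if c (Fin.last m) = some ABSymbol.A then
        wt α β (m+1) (join m g c) * t ^ ((bfreeSet (m+1) (join m g c)).card - 1) else 0)
    = wt α β m g * (α * t ^ (bfreeSet m g).card) := by
  rw [← fiber_c α β t m (bfreeSet m g), Finset.mul_sum]
  refine Finset.sum_congr rfl fun c _ => ?_
  by_cases h : c (Fin.last m) = some ABSymbol.A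
  · rw [if_pos h, if_pos h, wt_join, bf_join']
    ring
  · rw [if_neg h, if_neg h, mul_zero]

lemma inner_b (α β t : ℝ) (m : ℕ) (g : Fin m → Fin m → Option ABSymbol) (p : Fin m) :
    ∑ c ∈ univ.filter (fun c : Fin (m+1) → Option ABSymbol => Valid m (bfreeSet m g) c),
      (if c p.castSucc ≠ none then
        wt α β (m+1) (join m g c) * t ^ (bfreeSet (m+1) (join m g c)).card else 0)
    = wt α β m g * (if p ∈ bfreeSet m g then
        (α * t + β) * β * (t + β) ^ ((bfreeSet m g).erase p).card else 0) := by
  by_cases hp : p ∈ bfreeSet m g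
  · rw [if_pos hp, ← fiber_b α β t m (bfreeSet m g) p hp, Finset.mul_sum]
    refine Finset.sum_congr rfl fun c _ => ?_
    by_cases h : c p.castSucc ≠ none
    · rw [if_pos h, if_pos h, wt_join, bf_join']
      ring
    · rw [if_neg h, if_neg h, mul_zero]
  · rw [if_neg hp, mul_zero]
    refine Finset.sum_eq_zero fun c hc => ?_
    rw [mem_filter] at hc
    rw [if_neg]
    intro h
    exact hp (hc.2.2.2 p h)

lemma corner_bfree (m : ℕ) (g : Fin (m+1) → Fin (m+1) → Option ABSymbol)
    (hg : IsABStaircase (m+1) g) :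
    (Fin.last m ∈ bfreeSet (m+1) g) ↔ g (Fin.last m) 0 = some ABSymbol.A := by
  simp only [bfreeSet, mem_filter, mem_univ, true_and]
  constructor
  · intro h
    have hne : g (Fin.last m) 0 ≠ none := hg.2.2.2 (Fin.last m) 0 (by simp [Fin.last])
    rcases ho : g (Fin.last m) 0 with _ | s
    · exact absurd ho hne
    · cases s
      · rfl
      · exact absurd ho (fun hh => (h 0) hh)
  · intro h j
    induction j using Fin.cases with
    | zero => rw [h]; simp
    | succ b =>
      rw [hg.1 (Fin.last m) b.succ (by simp [Fin.last, Fin.val_succ])]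
      simp

noncomputable def Fsum (α β t : ℝ) (n : ℕ) (J : Finset ℕ) : ℝ :=
  ∑ f ∈ univ.filter (fun f : Fin n → Fin n → Option ABSymbol => IsABStaircase n f),
    ind (∀ x ∈ J, diag2 f x ≠ none) * (wt α β n f * t ^ (bfreeSet n f).card)

lemma corner_lemma (α β t : ℝ) (m : ℕ) (J' : Finset ℕ) (hJ' : ∀ x ∈ J', 2 ≤ x ∧ x ≤ m) :
    ∑ g ∈ univ.filter (fun g : Fin (m+1) → Fin (m+1) → Option ABSymbol =>
        IsABStaircase (m+1) g),
      ind ((∀ x ∈ J', diag2 g x ≠ none) ∧ g (Fin.last m) 0 = some ABSymbol.A)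
        * (wt α β (m+1) g * t ^ ((bfreeSet (m+1) g).card - 1))
    = α * Fsum α β t m (J'.image (· - 1)) := by
  rw [split_sum m (fun f =>
    ind ((∀ x ∈ J', diag2 f x ≠ none) ∧ f (Fin.last m) 0 = some ABSymbol.A)
      * (wt α β (m+1) f * t ^ ((bfreeSet (m+1) f).card - 1)))]
  rw [Fsum, Finset.mul_sum]
  refine Finset.sum_congr rfl fun g hg => ?_
  rw [mem_filter] at hg
  by_cases hE : ∀ y ∈ J'.image (· - 1), diag2 g y ≠ none
  · have hstep : ∀ c ∈ univ.filter (fun c : Fin (m+1) → Option ABSymbol =>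
        Valid m (bfreeSet m g) c),
        ind ((∀ x ∈ J', diag2 (join m g c) x ≠ none) ∧
            join m g c (Fin.last m) 0 = some ABSymbol.A)
          * (wt α β (m+1) (join m g c) * t ^ ((bfreeSet (m+1) (join m g c)).card - 1))
        = (if c (Fin.last m) = some ABSymbol.A then
            wt α β (m+1) (join m g c) * t ^ ((bfreeSet (m+1) (join m g c)).card - 1) else 0) := by
      intro c _
      have h1 : (∀ x ∈ J', diag2 (join m g c) x ≠ none) := by
        rw [ev_join m g c J' hJ']
        exact hE
      have h2 : join m g c (Fin.last m) 0 = c (Fin.last m) := rfl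
      by_cases h : c (Fin.last m) = some ABSymbol.A
      · rw [if_pos h, ind_pos ⟨h1, h2.trans h⟩, one_mul]
      · rw [if_neg h, ind_neg (fun hh => h (h2.symm.trans hh.2)), zero_mul]
    rw [Finset.sum_congr rfl hstep, inner_c, ind_pos hE]
    ring
  · rw [ind_neg hE, zero_mul, mul_zero]
    refine Finset.sum_eq_zero fun c _ => ?_
    rw [ind_neg, zero_mul]
    intro hh
    rw [ev_join m g c J' hJ'] at hh
    exact hE hh.1

lemma gap_card_bound (J : Finset ℕ) (M : ℕ) (hJ : J ⊆ Finset.Icc 1 M) (hg : Gap J) :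
    2 * J.card ≤ M + 1 := by
  have hdisj : Disjoint J (J.image (· + 1)) := by
    rw [Finset.disjoint_left]
    intro x hx hx'
    obtain ⟨y, hy, rfl⟩ := Finset.mem_image.mp hx'
    have := hg y hy (y+1) hx (by omega)
    omega
  have hsub : J ∪ J.image (· + 1) ⊆ Finset.Icc 1 (M+1) := by
    intro x hx
    rcases Finset.mem_union.mp hx with h | h
    · have := hJ h
      simp only [Finset.mem_Icc] at *
      omega
    · obtain ⟨y, hy, rfl⟩ := Finset.mem_image.mp h
      have := hJ hy
      simp only [Finset.mem_Icc] at *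
      omega
  have hcard := Finset.card_le_card hsub
  rw [Finset.card_union_of_disjoint hdisj,
    Finset.card_image_of_injective _ (add_left_injective 1), Nat.card_Icc] at hcard
  omega

lemma Fsum_zero (α β t : ℝ) : Fsum α β t 0 ∅ = 1 := by
  rw [Fsum]
  have h1 : (univ.filter (fun f : Fin 0 → Fin 0 → Option ABSymbol => IsABStaircase 0 f))
      = univ := by
    refine Finset.filter_true_of_mem fun f _ => ?_
    exact ⟨fun i => i.elim0, fun i => i.elim0, fun i => i.elim0, fun i => i.elim0⟩
  have h2 : ∀ f : Fin 0 → Fin 0 → Option ABSymbol,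
      ind (∀ x ∈ (∅ : Finset ℕ), diag2 f x ≠ none)
        * (wt α β 0 f * t ^ (bfreeSet 0 f).card) = 1 := by
    intro f
    rw [ind_pos (by simp)]
    have hNA : NA 0 f = 0 := by simp [NA]
    have hNB : NB 0 f = 0 := by simp [NB]
    have hbf : (bfreeSet 0 f).card = 0 := by simp [bfreeSet]
    rw [wt, hNA, hNB, hbf]
    simp
  rw [h1, Finset.sum_congr rfl (fun f _ => h2 f), Finset.sum_const, nsmul_eq_mul]
  have : Fintype.card (Fin 0 → Fin 0 → Option ABSymbol) = 1 := by
    simp [Fintype.card_pi]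
  rw [Finset.card_univ, this]
  simp

lemma main_ind (α β : ℝ) : ∀ n : ℕ, ∀ J : Finset ℕ, J ⊆ Finset.Icc 1 (n-1) → Gap J →
    ∀ t : ℝ,
    Fsum α β t n J
      = (α*β)^J.card * ∏ i ∈ Finset.range (n - J.card), (α*t + β + (i:ℝ)*(α*β)) := by
  intro n
  induction n using Nat.strong_induction_on with
  | _ n IH =>
    match n with
    | 0 =>
      intro J hJ hg t
      have hJe : J = ∅ := Finset.subset_empty.mp (by simpa using hJ)
      subst hJe
      rw [Fsum_zero]
      simp
    | (m+1) =>
      intro J hJ hg t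
      have hJm : J ⊆ Finset.Icc 1 m := by simpa using hJ
      have hrb : 2 * J.card ≤ m + 1 := gap_card_bound J m hJm hg
      have hrm : J.card ≤ m := by
        by_cases hJe : J = ∅
        · simp [hJe]
        · have h1 : 1 ≤ J.card := Finset.card_pos.mpr (Finset.nonempty_iff_ne_empty.mpr hJe)
          omega
      by_cases h1 : 1 ∈ J
      · -- case 1 ∈ J
        have hm1 : 1 ≤ m := by
          have := hJm h1
          simp only [Finset.mem_Icc] at this
          omega
        obtain ⟨k, rfl⟩ : ∃ k, m = k + 1 := ⟨m - 1, by omega⟩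
        have hr1 : 1 ≤ J.card := Finset.card_pos.mpr ⟨1, h1⟩
        set J₁ := J.erase 1 with hJ₁def
        have hJins : J = insert 1 J₁ := (Finset.insert_erase h1).symm
        have hJ₁mem : ∀ x ∈ J₁, 3 ≤ x ∧ x ≤ k + 1 := by
          intro x hx
          have hxJ : x ∈ J := Finset.mem_of_mem_erase hx
          have hxne : x ≠ 1 := Finset.ne_of_mem_erase hx
          have hb := hJm hxJ
          simp only [Finset.mem_Icc] at hb
          have := hg 1 h1 x hxJ (by omega)
          omega
        set p : Fin (k+1) := ⟨k, by omega⟩ with hpdef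
        have hpc : p.castSucc = (⟨k + 1 - 1, by omega⟩ : Fin (k+1+1)) := Fin.ext (by simp [hpdef])
        rw [Fsum, split_sum (k+1) (fun f =>
          ind (∀ x ∈ J, diag2 f x ≠ none)
            * (wt α β (k+1+1) f * t ^ (bfreeSet (k+1+1) f).card))]
        have hstep : ∀ g ∈ univ.filter
            (fun g : Fin (k+1) → Fin (k+1) → Option ABSymbol => IsABStaircase (k+1) g),
            (∑ c ∈ univ.filter (fun c : Fin (k+1+1) → Option ABSymbol =>
                Valid (k+1) (bfreeSet (k+1) g) c),
              ind (∀ x ∈ J, diag2 (join (k+1) g c) x ≠ none)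
                * (wt α β (k+1+1) (join (k+1) g c)
                    * t ^ (bfreeSet (k+1+1) (join (k+1) g c)).card))
            = ((α*t+β) * β) *
              (ind ((∀ x ∈ J₁.image (· - 1), diag2 g x ≠ none) ∧
                  g (Fin.last k) 0 = some ABSymbol.A)
                * (wt α β (k+1) g * (t+β) ^ ((bfreeSet (k+1) g).card - 1))) := by
          intro g hgmem
          rw [mem_filter] at hgmem
          have hgst := hgmem.2
          have hEvsplit : ∀ c : Fin (k+1+1) → Option ABSymbol,
              (∀ x ∈ J, diag2 (join (k+1) g c) x ≠ none)
              ↔ (c p.castSucc ≠ none ∧ ∀ x ∈ J₁.image (· - 1), diag2 g x ≠ none) := by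
            intro c
            rw [hJins, Finset.forall_mem_insert, diag2_join_one (k+1) (by omega) g c, ← hpc,
              ev_join (k+1) g c J₁ (fun x hx => ⟨by have := hJ₁mem x hx; omega,
                (hJ₁mem x hx).2⟩)]
          by_cases hE : ∀ x ∈ J₁.image (· - 1), diag2 g x ≠ none
          · have hsummand : ∀ c : Fin (k+1+1) → Option ABSymbol,
                ind (∀ x ∈ J, diag2 (join (k+1) g c) x ≠ none)
                  * (wt α β (k+1+1) (join (k+1) g c)
                      * t ^ (bfreeSet (k+1+1) (join (k+1) g c)).card)
                = (if c p.castSucc ≠ none then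
                    wt α β (k+1+1) (join (k+1) g c)
                      * t ^ (bfreeSet (k+1+1) (join (k+1) g c)).card else 0) := by
              intro c
              by_cases hc : c p.castSucc ≠ none
              · rw [if_pos hc, ind_pos ((hEvsplit c).mpr ⟨hc, hE⟩), one_mul]
              · rw [if_neg hc, ind_neg (fun hh => hc ((hEvsplit c).mp hh).1), zero_mul]
            rw [Finset.sum_congr rfl (fun c _ => hsummand c), inner_b]
            by_cases hcorner : g (Fin.last k) 0 = some ABSymbol.A
            · have hpmem : p ∈ bfreeSet (k+1) g := by
                rw [show p = Fin.last k from Fin.ext (by simp [Fin.last, hpdef])]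
                exact (corner_bfree k g hgst).mpr hcorner
              rw [if_pos hpmem, ind_pos ⟨hE, hcorner⟩,
                Finset.card_erase_of_mem hpmem]
              ring
            · have hpmem : p ∉ bfreeSet (k+1) g := by
                rw [show p = Fin.last k from Fin.ext (by simp [Fin.last, hpdef])]
                exact fun hh => hcorner ((corner_bfree k g hgst).mp hh)
              rw [if_neg hpmem, ind_neg (fun hh => hcorner hh.2), mul_zero, zero_mul, mul_zero]
          · have hsummand : ∀ c : Fin (k+1+1) → Option ABSymbol,
                ind (∀ x ∈ J, diag2 (join (k+1) g c) x ≠ none)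
                  * (wt α β (k+1+1) (join (k+1) g c)
                      * t ^ (bfreeSet (k+1+1) (join (k+1) g c)).card)
                = 0 := by
              intro c
              rw [ind_neg (fun hh => hE ((hEvsplit c).mp hh).2), zero_mul]
            rw [Finset.sum_congr rfl (fun c _ => hsummand c), Finset.sum_const_zero,
              ind_neg (fun hh => hE hh.1), zero_mul, mul_zero]
        rw [Finset.sum_congr rfl hstep, ← Finset.mul_sum,
          corner_lemma α β (t+β) k (J₁.image (· - 1))
            (fun x hx => by
              obtain ⟨y, hy, rfl⟩ := Finset.mem_image.mp hx
              have := hJ₁mem y hy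
              omega)]
        have hIH := IH k (by omega) ((J₁.image (· - 1)).image (· - 1))
          (by
            intro x hx
            obtain ⟨y, hy, rfl⟩ := Finset.mem_image.mp hx
            obtain ⟨z, hz, rfl⟩ := Finset.mem_image.mp hy
            have := hJ₁mem z hz
            simp only [Finset.mem_Icc]
            omega)
          (by
            apply gap_image_sub
            · intro x hx
              obtain ⟨z, hz, rfl⟩ := Finset.mem_image.mp hx
              have := hJ₁mem z hz
              omega
            · apply gap_image_sub
              · intro x hx
                have := hJ₁mem x hx
                omega
              · intro x hx y hy hxy
                exact hg x (Finset.mem_of_mem_erase hx) y (Finset.mem_of_mem_erase hy) hxy)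
          (t + β)
        rw [hIH]
        have hcards : ((J₁.image (· - 1)).image (· - 1)).card = J.card - 1 := by
          rw [card_image_sub _ (fun x hx => by
              obtain ⟨z, hz, rfl⟩ := Finset.mem_image.mp hx
              have := hJ₁mem z hz
              omega),
            card_image_sub _ (fun x hx => by have := hJ₁mem x hx; omega),
            hJ₁def, Finset.card_erase_of_mem h1]
        rw [hcards]
        set r := J.card with hrdef
        have hk2 : k + 1 + 1 - r = (k - (r - 1)) + 1 := by omega
        rw [hk2, Finset.prod_range_succ']
        have hprodeq : ∏ i ∈ Finset.range (k - (r - 1)), (α*(t+β) + β + (i:ℝ)*(α*β))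
            = ∏ i ∈ Finset.range (k - (r - 1)), (α*t + β + ((i:ℝ)+1)*(α*β)) := by
          refine Finset.prod_congr rfl fun i _ => by push_cast; ring
        rw [hprodeq]
        have hpow : (α*β)^r = (α*β)^(r-1) * (α*β) := by
          rw [← pow_succ]
          congr 1
          omega
        rw [hpow]
        push_cast
        ring
      · -- case 1 ∉ J
        have hJ2 : ∀ x ∈ J, 2 ≤ x ∧ x ≤ m := by
          intro x hx
          have hb := hJm hx
          simp only [Finset.mem_Icc] at hb
          have : x ≠ 1 := fun hh => h1 (hh ▸ hx)
          omega
        rw [Fsum, split_sum m (fun f =>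
          ind (∀ x ∈ J, diag2 f x ≠ none)
            * (wt α β (m+1) f * t ^ (bfreeSet (m+1) f).card))]
        have hstep : ∀ g ∈ univ.filter
            (fun g : Fin m → Fin m → Option ABSymbol => IsABStaircase m g),
            (∑ c ∈ univ.filter (fun c : Fin (m+1) → Option ABSymbol =>
                Valid m (bfreeSet m g) c),
              ind (∀ x ∈ J, diag2 (join m g c) x ≠ none)
                * (wt α β (m+1) (join m g c) * t ^ (bfreeSet (m+1) (join m g c)).card))
            = (α*t+β) *
              (ind (∀ x ∈ J.image (· - 1), diag2 g x ≠ none)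
                * (wt α β m g * (t+β) ^ (bfreeSet m g).card)) := by
          intro g hgmem
          by_cases hE : ∀ x ∈ J.image (· - 1), diag2 g x ≠ none
          · have hsummand : ∀ c : Fin (m+1) → Option ABSymbol,
                ind (∀ x ∈ J, diag2 (join m g c) x ≠ none)
                  * (wt α β (m+1) (join m g c) * t ^ (bfreeSet (m+1) (join m g c)).card)
                = wt α β (m+1) (join m g c) * t ^ (bfreeSet (m+1) (join m g c)).card := by
              intro c
              rw [ind_pos ((ev_join m g c J hJ2).mpr hE), one_mul]
            rw [Finset.sum_congr rfl (fun c _ => hsummand c), inner_a, ind_pos hE]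
            ring
          · have hsummand : ∀ c : Fin (m+1) → Option ABSymbol,
                ind (∀ x ∈ J, diag2 (join m g c) x ≠ none)
                  * (wt α β (m+1) (join m g c) * t ^ (bfreeSet (m+1) (join m g c)).card)
                = 0 := by
              intro c
              rw [ind_neg (fun hh => hE ((ev_join m g c J hJ2).mp hh)), zero_mul]
            rw [Finset.sum_congr rfl (fun c _ => hsummand c), Finset.sum_const_zero,
              ind_neg hE, zero_mul, mul_zero]
        rw [Finset.sum_congr rfl hstep, ← Finset.mul_sum, ← Fsum]
        have hIH := IH m (by omega) (J.image (· - 1))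
          (by
            intro x hx
            obtain ⟨z, hz, rfl⟩ := Finset.mem_image.mp hx
            have := hJ2 z hz
            simp only [Finset.mem_Icc]
            omega)
          (gap_image_sub J (fun x hx => by have := hJ2 x hx; omega) hg)
          (t + β)
        rw [hIH, card_image_sub J (fun x hx => by have := hJ2 x hx; omega)]
        set r := J.card with hrdef
        have hk2 : m + 1 - r = (m - r) + 1 := by omega
        rw [hk2, Finset.prod_range_succ']
        have hprodeq : ∏ i ∈ Finset.range (m - r), (α*(t+β) + β + (i:ℝ)*(α*β))
            = ∏ i ∈ Finset.range (m - r), (α*t + β + ((i:ℝ)+1)*(α*β)) := by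
          refine Finset.prod_congr rfl fun i _ => by push_cast; ring
        rw [hprodeq]
        push_cast
        ring

lemma sum_eq_of_iff {γ : Type*} [Fintype γ] (P Q : γ → Prop)
    [DecidablePred P] [DecidablePred Q] (h : ∀ f, P f ↔ Q f) (w : γ → ℝ) :
    ∑ f ∈ univ.filter P, w f = ∑ f ∈ univ.filter Q, w f := by
  refine Finset.sum_congr ?_ (fun _ _ => rfl)
  ext f
  simp only [mem_filter, mem_univ, true_and]
  exact h f

lemma sum_and_to_ind {γ : Type*} [Fintype γ] (P E : γ → Prop)
    [DecidablePred (fun f => P f ∧ E f)] [DecidablePred P] (w v : γ → ℝ)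
    (hw : ∀ f, P f → E f → w f = v f) :
    ∑ f ∈ univ.filter (fun f => P f ∧ E f), w f
    = ∑ f ∈ univ.filter P, ind (E f) * v f := by
  rw [Finset.sum_filter, Finset.sum_filter]
  refine Finset.sum_congr rfl fun f _ => ?_
  by_cases hP : P f
  · by_cases hE : E f
    · rw [if_pos ⟨hP, hE⟩, if_pos hP, ind_pos hE, one_mul, hw f hP hE]
    · rw [if_neg (fun hh => hE hh.2), if_pos hP, ind_neg hE, zero_mul]
  · rw [if_neg (fun hh => hP hh.1), if_neg hP]

lemma Z_eq_Fsum (α β : ℝ) (n : ℕ) : Z α β n = Fsum α β 1 n ∅ := by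
  rw [Z, Fsum]
  refine Finset.sum_congr rfl (fun f _ => ?_)
  rw [ind_pos (by simp), one_pow, mul_one, one_mul]
/-- Theorem (`rNZero`): the joint probability that the second-main-diagonal
boxes indexed by `1 ≤ j_1 < … < j_r ≤ n-1` (with `j_k ≤ j_{k+1} - 2`) are all
nonempty is `∏_{k=1}^r 1 / (n + a + b - r + k - 1)` (below `k : Fin r` is the
`0`-based index `k - 1`). -/
theorem stmt12 (n r : ℕ) (hn : 1 ≤ n) (hr : 1 ≤ r) (α β : ℝ) (hα : 0 < α) (hβ : 0 < β)
    (a b : ℝ) (ha : a = 1 / α) (hb : b = 1 / β)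
    (j : Fin r → ℕ) (hlb : ∀ k, 1 ≤ j k) (hub : ∀ k, j k ≤ n - 1)
    (hgap : ∀ k l : Fin r, k < l → j k + 2 ≤ j l) :
    stProb α β n (fun f => ∀ k : Fin r, diag2 f (j k) ≠ none)
      = ∏ k : Fin r, 1 / ((n : ℝ) + a + b - (r : ℝ) + ((k : ℕ) : ℝ)) := by
  classical
  set J : Finset ℕ := univ.image j with hJdef
  have hinj : Function.Injective j := by
    intro k l hkl
    by_contra hne
    rcases lt_or_gt_of_ne hne with h | h
    · have := hgap k l h; omega
    · have := hgap l k h; omega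
  have hcard : J.card = r := by
    rw [hJdef, Finset.card_image_of_injective _ hinj, Finset.card_univ, Fintype.card_fin]
  have hJsub : J ⊆ Finset.Icc 1 (n-1) := by
    intro x hx
    obtain ⟨k, -, rfl⟩ := Finset.mem_image.mp hx
    simp only [Finset.mem_Icc]
    exact ⟨hlb k, hub k⟩
  have hGap : Gap J := by
    intro x hx y hy hxy
    obtain ⟨k, -, rfl⟩ := Finset.mem_image.mp hx
    obtain ⟨l, -, rfl⟩ := Finset.mem_image.mp hy
    rcases lt_trichotomy k l with h | h | h
    · exact hgap k l h
    · subst h; omega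
    · have := hgap l k h; omega
  have h2r : 2*r ≤ n := by
    have hbd := gap_card_bound J (n-1) hJsub hGap
    rw [hcard] at hbd
    omega
  have hiff : ∀ f : Fin n → Fin n → Option ABSymbol,
      (IsABStaircase n f ∧ ∀ k : Fin r, diag2 f (j k) ≠ none)
      ↔ (IsABStaircase n f ∧ ∀ x ∈ J, diag2 f x ≠ none) := by
    intro f
    refine and_congr_right fun _ => ⟨fun h x hx => ?_, fun h k => ?_⟩
    · obtain ⟨k, -, rfl⟩ := Finset.mem_image.mp hx
      exact h k
    · exact h (j k) (Finset.mem_image_of_mem j (mem_univ k))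
  have hnum : ∀ (hD : DecidablePred fun f : Fin n → Fin n → Option ABSymbol =>
      IsABStaircase n f ∧ ∀ k : Fin r, diag2 f (j k) ≠ none),
      (∑ f ∈ @Finset.filter _ _ hD univ, wt α β n f) = Fsum α β 1 n J := by
    intro hD
    rw [Finset.filter_congr_decidable]
    rw [sum_eq_of_iff _ _ hiff (wt α β n),
      sum_and_to_ind (fun f => IsABStaircase n f) (fun f => ∀ x ∈ J, diag2 f x ≠ none)
        (wt α β n) (fun f => wt α β n f * (1:ℝ) ^ (bfreeSet n f).card)
        (fun f _ _ => by
          show wt α β n f = wt α β n f * (1:ℝ) ^ (bfreeSet n f).card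
          rw [one_pow, mul_one]),
      ← Fsum]
  rw [stProb, hnum _, Z_eq_Fsum,
    main_ind α β n J hJsub hGap 1,
    main_ind α β n ∅ (Finset.empty_subset _) (fun x hx => absurd hx (Finset.notMem_empty x)) 1,
    hcard]
  simp only [Finset.card_empty, pow_zero, one_mul, Nat.sub_zero]
  -- algebra
  have hc : ∀ i : ℕ, (0:ℝ) < α*1 + β + (i:ℝ)*(α*β) := by
    intro i
    have : (0:ℝ) ≤ (i:ℝ)*(α*β) := by positivity
    nlinarith
  have hsplit : ∏ i ∈ Finset.range n, (α*1 + β + (i:ℝ)*(α*β))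
      = (∏ i ∈ Finset.range (n-r), (α*1 + β + (i:ℝ)*(α*β)))
        * ∏ i ∈ Finset.range r, (α*1 + β + (((n-r+i:ℕ)):ℝ)*(α*β)) := by
    conv_lhs => rw [show n = (n - r) + r from by omega]
    rw [Finset.prod_range_add]
  have hP1ne : (∏ i ∈ Finset.range (n-r), (α*1 + β + (i:ℝ)*(α*β))) ≠ 0 :=
    ne_of_gt (Finset.prod_pos fun i _ => hc i)
  rw [hsplit, mul_comm ((α*β)^r) (∏ i ∈ Finset.range (n-r), (α*1 + β + (i:ℝ)*(α*β)))]
  rw [mul_div_mul_left _ _ hP1ne]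
  rw [Fin.prod_univ_eq_prod_range (fun k => 1 / ((n : ℝ) + a + b - (r : ℝ) + (k:ℝ))) r]
  have hpow : (α*β)^r = ∏ _i ∈ Finset.range r, (α*β) := by
    rw [Finset.prod_const, Finset.card_range]
  rw [hpow, ← Finset.prod_div_distrib]
  refine Finset.prod_congr rfl fun i _ => ?_
  have hcast : ((n - r + i : ℕ) : ℝ) = (n:ℝ) - (r:ℝ) + (i:ℝ) := by
    push_cast [Nat.cast_sub (by omega : r ≤ n)]
    ring
  have hden : α*1 + β + (((n-r+i:ℕ)):ℝ)*(α*β)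
      = (α*β) * ((n : ℝ) + a + b - (r : ℝ) + (i:ℝ)) := by
    rw [hcast, ha, hb]
    field_simp
    ring
  have hDpos : (0:ℝ) < (n : ℝ) + a + b - (r : ℝ) + (i:ℝ) := by
    have h1 : (0:ℝ) < a := by rw [ha]; positivity
    have h2 : (0:ℝ) < b := by rw [hb]; positivity
    have h3 : (r:ℝ) ≤ (n:ℝ) := by exact_mod_cast (by omega : r ≤ n)
    have h4 : (0:ℝ) ≤ (i:ℝ) := Nat.cast_nonneg i
    linarith
  rw [hden, mul_comm (α*β) _, div_mul_eq_div_div, div_right_comm,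
    div_self (by positivity : (α*β) ≠ 0)]
end Dev
end
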